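/- arXiv:1012.5297 — 11 statements merged into one kernel-verified Lean document; each statement's English description precedes it below -/
import Mathlib

section
/- Let K be a field of characteristic zero and L a field extension of K. Let f ∈ K[X] be nonconstant of degree m, normalized so that the coefficient of X^{m-1} in f is zero. Suppose a ∈ L with a ∉ K and b ∈ L are such that the polynomial f(aX + b), computed in L[X], has all of its coefficients in (the image of) K. Then k := gcd{ i > 0 : the coefficient of X^i in f is nonzero } satisfies k > 1, and there exists h ∈ K[X] with f(X) = h(X^k). -/
open Polynomial

private lemma coeff_comp_C_mul_X' {R : Type*} [CommRing R] (p : R[X]) (a : R) (n : ℕ) :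
    (p.comp (C a * X)).coeff n = p.coeff n * a ^ n := by
  rw [comp_eq_sum_left, Polynomial.sum_def, finset_sum_coeff]
  have h : ∀ i ∈ p.support, (C (p.coeff i) * (C a * X) ^ i).coeff n
      = if i = n then p.coeff i * a ^ i else 0 := by
    intro i _
    rw [mul_pow, ← C_pow, ← mul_assoc, ← C_mul, coeff_C_mul, coeff_X_pow]
    simp [mul_ite, eq_comm]
  rw [Finset.sum_congr rfl h, Finset.sum_ite_eq' p.support n (fun i => p.coeff i * a ^ i)]
  by_cases hn : n ∈ p.support
  · simp [hn]
  · simp [hn, Polynomial.notMem_support_iff.mp hn]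

private lemma taylor_coeff_top {R : Type*} [CommRing R] (p : R[X]) (r : R) {m : ℕ}
    (hm : p.natDegree ≤ m) : (taylor r p).coeff m = p.coeff m := by
  rw [taylor_coeff]
  have : hasseDeriv m p = C (p.coeff m) := by
    ext n
    rw [hasseDeriv_coeff, coeff_C]
    rcases Nat.eq_zero_or_pos n with h | h
    · simp [h]
    · rw [if_neg (by omega), coeff_eq_zero_of_natDegree_lt (by omega), mul_zero]
  rw [this, eval_C]

private lemma taylor_coeff_penultimate {R : Type*} [CommRing R] (p : R[X]) (r : R) {m : ℕ}
    (hm : p.natDegree ≤ m) (h1 : 1 ≤ m) :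
    (taylor r p).coeff (m - 1) = p.coeff (m - 1) + (m : R) * p.coeff m * r := by
  rw [taylor_coeff]
  have : hasseDeriv (m - 1) p = C (p.coeff (m - 1)) + C ((m : R) * p.coeff m) * X := by
    ext n
    rw [hasseDeriv_coeff, coeff_add, coeff_C, coeff_C_mul, coeff_X]
    rcases n with _ | (_ | n)
    · simp [Nat.choose_self]
    · have h2 : 1 + (m - 1) = m := by omega
      have h3 : m.choose (m - 1) = m := by
        have := Nat.choose_symm (n := m) (k := 1) h1
        rwa [Nat.choose_one_right] at this
      simp [h2, h3]
    · rw [coeff_eq_zero_of_natDegree_lt (by omega)]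
      simp only [mul_zero]
      rw [if_neg (by omega), if_neg (by omega)]
      simp
  rw [this]
  simp [mul_comm]

/-- **Lemma 1.2 (affineChange), first part.**  If `f ∈ K[X]` is nonconstant with vanishing
penultimate coefficient, `a ∉ K`, and `f(aX + b)` has all coefficients in `K`, then the gcd
`k` of the positive-degree support of `f` exceeds `1`, and `f(X) = h(X^k)` for some
`h ∈ K[X]`. -/
theorem davenport_affineChange
    {K L : Type*} [Field K] [Field L] [CharZero K] [Algebra K L]
    (f : Polynomial K) (hf : 1 ≤ f.natDegree)
    (hnorm : f.coeff (f.natDegree - 1) = 0)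
    (a b : L) (ha : a ∉ Set.range (algebraMap K L))
    (hcoeffs : ∃ g : Polynomial K,
      Polynomial.map (algebraMap K L) g =
        (Polynomial.map (algebraMap K L) f).comp (Polynomial.C a * Polynomial.X + Polynomial.C b)) :
    1 < (f.support.filter (fun i => 0 < i)).gcd id ∧
      ∃ h : Polynomial K,
        f = h.comp (Polynomial.X ^ ((f.support.filter (fun i => 0 < i)).gcd id)) := by
  obtain ⟨g, hg⟩ := hcoeffs
  set φ := algebraMap K L with hφdef
  have hφ : Function.Injective φ := (algebraMap K L).injective
  have ha0 : a ≠ 0 := fun h => ha ⟨0, by simp [h]⟩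
  set m := f.natDegree with hm
  have hFdeg : (f.map φ).natDegree = m := natDegree_map_eq_of_injective hφ f
  have hf0 : f ≠ 0 := fun h => by rw [hm, h, natDegree_zero] at hf; omega
  have hfm : f.coeff m ≠ 0 := by
    rw [hm]; exact leadingCoeff_ne_zero.mpr hf0
  have hφfm : φ (f.coeff m) ≠ 0 := fun h => hfm (hφ (by rwa [map_zero]))
  -- decompose the affine substitution as a translation followed by a dilation
  haveI : CharZero L := charZero_of_injective_algebraMap hφ
  have hcomp : (f.map φ).comp (C a * X + C b) = (taylor b (f.map φ)).comp (C a * X) := by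
    rw [taylor_apply, comp_assoc]
    congr 1
    simp [add_comp]
  have key : ∀ i, φ (g.coeff i) = (taylor b (f.map φ)).coeff i * a ^ i := by
    intro i
    have := congrArg (fun p => p.coeff i) hg
    simpa [coeff_map, hcomp, coeff_comp_C_mul_X'] using this
  have keym : φ (g.coeff m) = φ (f.coeff m) * a ^ m := by
    have := key m
    rwa [taylor_coeff_top (f.map φ) b hFdeg.le, coeff_map] at this
  have keym1 : φ (g.coeff (m-1)) = (m : L) * φ (f.coeff m) * b * a ^ (m-1) := by
    have h0 := key (m-1)
    rw [taylor_coeff_penultimate (f.map φ) b hFdeg.le hf, coeff_map, coeff_map, hnorm,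
      map_zero, zero_add] at h0
    exact h0
  have hgm : g.coeff m ≠ 0 := by
    intro h
    rw [h, map_zero] at keym
    exact (mul_ne_zero hφfm (pow_ne_zero m ha0)) keym.symm
  have hmK : ((m : K)) ≠ 0 := Nat.cast_ne_zero.2 (by omega)
  set β : K := g.coeff (m-1) / ((m : K) * g.coeff m) with hβ
  have hb : b = a * φ β := by
    have hmul : ((m : L) * φ (f.coeff m) * a ^ (m-1)) ≠ 0 :=
      mul_ne_zero (mul_ne_zero (Nat.cast_ne_zero.2 (by omega)) hφfm) (pow_ne_zero _ ha0)
    apply mul_right_cancel₀ hmul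
    have hpow : a ^ (m-1) * a = a ^ m := by
      rw [← pow_succ]; congr 1; omega
    have h1 : β * ((m : K) * g.coeff m) = g.coeff (m-1) :=
      div_mul_cancel₀ _ (mul_ne_zero hmK hgm)
    calc b * ((m : L) * φ (f.coeff m) * a ^ (m-1))
        = (m : L) * φ (f.coeff m) * b * a ^ (m-1) := by ring
      _ = φ (g.coeff (m-1)) := keym1.symm
      _ = φ (β * ((m : K) * g.coeff m)) := by rw [h1]
      _ = φ β * ((m : L) * φ (g.coeff m)) := by
          rw [map_mul, map_mul, map_natCast]
      _ = φ β * ((m : L) * (φ (f.coeff m) * a ^ m)) := by rw [keym]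
      _ = φ β * ((m : L) * (φ (f.coeff m) * (a ^ (m-1) * a))) := by rw [hpow]
      _ = a * φ β * ((m : L) * φ (f.coeff m) * a ^ (m-1)) := by ring
  -- the translated polynomial
  have hg2map : (g.comp (X - C β)).map φ = (f.map φ).comp (C a * X) := by
    rw [Polynomial.map_comp, hg, Polynomial.map_sub, map_X, map_C, comp_assoc]
    congr 1
    rw [add_comp, mul_comp, C_comp, C_comp, X_comp, hb, mul_sub, ← C_mul, sub_add_cancel]
  have key2 : ∀ i, φ ((g.comp (X - C β)).coeff i) = φ (f.coeff i) * a ^ i := by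
    intro i
    have := congrArg (fun p => p.coeff i) hg2map
    simpa [coeff_map, coeff_comp_C_mul_X'] using this
  have hrange : ∀ i ∈ f.support, ∃ c : K, φ c = a ^ i := by
    intro i hi
    have hfi : φ (f.coeff i) ≠ 0 :=
      fun h => (mem_support_iff.mp hi) (hφ (by rwa [map_zero]))
    refine ⟨(g.comp (X - C β)).coeff i / f.coeff i, ?_⟩
    rw [map_div₀, key2 i, mul_div_cancel_left₀ _ hfi]
  -- the subgroup of exponents
  let H : AddSubgroup ℤ :=
    { carrier := {n : ℤ | ∃ c : K, φ c = a ^ n}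
      zero_mem' := ⟨1, by simp⟩
      add_mem' := by
        rintro x y ⟨c, hc⟩ ⟨d, hd⟩
        exact ⟨c * d, by rw [map_mul, hc, hd, ← zpow_add₀ ha0]⟩
      neg_mem' := by
        rintro x ⟨c, hc⟩
        exact ⟨c⁻¹, by rw [map_inv₀, hc, ← zpow_neg]⟩ }
  obtain ⟨d, hd⟩ := Int.subgroup_cyclic H
  have hmemH : ∀ n : ℤ, (∃ c : K, φ c = a ^ n) ↔ d ∣ n := by
    intro n
    have : n ∈ H ↔ n ∈ AddSubgroup.closure {d} := by rw [hd]
    rw [AddSubgroup.mem_closure_singleton] at this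
    rw [show (∃ c : K, φ c = a ^ n) ↔ n ∈ H from Iff.rfl, this]
    constructor
    · rintro ⟨z, rfl⟩; exact ⟨z, by rw [smul_eq_mul]; exact mul_comm z d⟩
    · rintro ⟨z, rfl⟩; exact ⟨z, by rw [smul_eq_mul]; exact mul_comm z d⟩
  have hdvd : ∀ i ∈ f.support.filter (fun i => 0 < i), d ∣ (i : ℤ) := by
    intro i hi
    rw [Finset.mem_filter] at hi
    obtain ⟨c, hc⟩ := hrange i hi.1
    exact (hmemH i).mp ⟨c, by rw [hc, zpow_natCast]⟩
  set k := (f.support.filter (fun i => 0 < i)).gcd id with hk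
  have hmmem : m ∈ f.support.filter (fun i => 0 < i) :=
    Finset.mem_filter.2 ⟨mem_support_iff.2 hfm, by omega⟩
  have hdk : d.natAbs ∣ k := by
    apply Finset.dvd_gcd
    intro i hi
    have := Int.natAbs_dvd_natAbs.mpr (hdvd i hi)
    simpa using this
  have hd1 : d.natAbs ≠ 1 := by
    intro h
    have hd1' : d ∣ (1 : ℤ) := Int.natAbs_dvd.mp (by rw [h]; exact one_dvd _)
    obtain ⟨c, hc⟩ := (hmemH 1).mpr hd1'
    rw [zpow_one] at hc
    exact ha ⟨c, hc⟩
  have hd0 : d.natAbs ≠ 0 := by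
    intro h
    rw [Int.natAbs_eq_zero] at h
    subst h
    have hdm := hdvd m hmmem
    rw [zero_dvd_iff, Nat.cast_eq_zero] at hdm
    omega
  have hk0 : k ≠ 0 := by
    intro h
    have h2 : k ∣ m := Finset.gcd_dvd (f := id) hmmem
    rw [h, zero_dvd_iff] at h2
    omega
  have hk1 : 1 < k := by
    have h2 := Nat.le_of_dvd (Nat.pos_of_ne_zero hk0) hdk
    omega
  refine ⟨hk1, contract k f, ?_⟩
  have hexp : (expand K k) (contract k f) = f := by
    ext n
    rw [coeff_expand (Nat.pos_of_ne_zero hk0), coeff_contract hk0]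
    split_ifs with h
    · rw [Nat.div_mul_cancel h]
    · by_contra hne
      have hne' : f.coeff n ≠ 0 := fun hz => hne hz.symm
      have hn0 : 0 < n := by
        rcases Nat.eq_zero_or_pos n with h0 | h0
        · exact absurd (h0 ▸ dvd_zero k) h
        · exact h0
      have h3 : k ∣ n :=
        Finset.gcd_dvd (f := id) (Finset.mem_filter.2 ⟨mem_support_iff.2 hne', hn0⟩)
      exact h h3
  rw [← expand_eq_comp_X_pow]
  exact hexp.symm
end

section
/- Let G be a finite group with permutation actions on finite sets A, B₁, …, B_t (t ≥ 1), where |A| = m ≥ 1 and |B_i| = n_i ≥ 1. Suppose σ∞ ∈ G acts on A as a single m-cycle and on each B_i as a single n_i-cycle. Assume that every g ∈ G whose action on some B_i has a fixed point also has a fixed point on A. Then m divides N = lcm(n₁, …, n_t). In particular, if t = 1, |B₁| = n, and moreover every g ∈ G having a fixed point on A also has a fixed point on B₁, then m = n. -/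
private lemma toPerm_pow_apply {G : Type*} [Group G] {X : Type*} [MulAction G X]
    (σ : G) (n : ℕ) (x : X) :
    (MulAction.toPerm σ ^ n : Equiv.Perm X) x = σ ^ n • x := by
  induction n generalizing x with
  | zero => simp
  | succ k ih =>
    rw [pow_succ, pow_succ, Equiv.Perm.mul_apply, MulAction.toPerm_apply, mul_smul]
    exact ih _

private lemma cyc_pow_smul {G : Type*} [Group G] {X : Type*} [Fintype X] [DecidableEq X]
    [MulAction G X] (σ : G)
    (h : (MulAction.toPerm σ : Equiv.Perm X).IsCycle ∧
      (MulAction.toPerm σ : Equiv.Perm X).support = Finset.univ)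
    (n : ℕ) (x : X) : σ ^ n • x = x ↔ Fintype.card X ∣ n := by
  have hne : ∀ y : X, (MulAction.toPerm σ : Equiv.Perm X) y ≠ y := fun y =>
    Equiv.Perm.mem_support.mp (h.2 ▸ Finset.mem_univ y)
  have hco : (MulAction.toPerm σ : Equiv.Perm X).IsCycleOn ↑(Finset.univ : Finset X) := by
    have h1 := h.1.isCycleOn
    rwa [Set.eq_univ_of_forall hne, ← Finset.coe_univ] at h1
  have := hco.pow_apply_eq (Finset.mem_univ x) (n := n)
  rw [Finset.card_univ, toPerm_pow_apply] at this
  exact this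

/-- **Proposition 3.2 (useInfty).**  Let a finite group `G` act on finite sets `A` and
`B i` (`i` ranging over a nonempty finite index type), and suppose `σ` acts as a single
cycle moving every point of `A` (an `m`-cycle, `m = |A|`) and of each `B i` (an
`n i`-cycle).  If every `g ∈ G` having a fixed point on some `B i` also has a fixed point
on `A`, then `m` divides `lcm (n 1, …, n t)`.  In particular if the index type is a
singleton and moreover every `g` fixing a point of `A` fixes a point of `B i`, then
`m = n i`. -/
theorem davenport_useInfty
    {G : Type*} [Group G] [Finite G] {ι : Type*} [Fintype ι] [Nonempty ι]
    (A : Type*) [Fintype A] [DecidableEq A] [Nonempty A] [MulAction G A]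
    (B : ι → Type*) [∀ i, Fintype (B i)] [∀ i, DecidableEq (B i)] [∀ i, Nonempty (B i)]
    [∀ i, MulAction G (B i)]
    (σ : G)
    (hA : (MulAction.toPerm σ : Equiv.Perm A).IsCycle ∧
      (MulAction.toPerm σ : Equiv.Perm A).support = Finset.univ)
    (hB : ∀ i, (MulAction.toPerm σ : Equiv.Perm (B i)).IsCycle ∧
      (MulAction.toPerm σ : Equiv.Perm (B i)).support = Finset.univ)
    (hfix : ∀ g : G, (∃ i, ∃ b : B i, g • b = b) → ∃ a : A, g • a = a) :
    Fintype.card A ∣ Finset.univ.lcm (fun i => Fintype.card (B i)) ∧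
      ((∀ i j : ι, i = j) →
        (∀ g : G, (∃ a : A, g • a = a) → ∀ i, ∃ b : B i, g • b = b) →
        ∀ i, Fintype.card A = Fintype.card (B i)) := by
  set N := Finset.univ.lcm (fun i => Fintype.card (B i)) with hN
  have hdvd : Fintype.card A ∣ N := by
    obtain ⟨i⟩ := (inferInstance : Nonempty ι)
    obtain ⟨b⟩ := (inferInstance : Nonempty (B i))
    have hb : σ ^ N • b = b :=
      (cyc_pow_smul σ (hB i) N b).mpr (Finset.dvd_lcm (Finset.mem_univ i))
    obtain ⟨a, ha⟩ := hfix (σ ^ N) ⟨i, b, hb⟩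
    exact (cyc_pow_smul σ hA N a).mp ha
  refine ⟨hdvd, fun hone hfix2 i => ?_⟩
  have h1 : Fintype.card A ∣ Fintype.card (B i) :=
    hdvd.trans (Finset.lcm_dvd fun j _ => by rw [hone j i])
  have h2 : Fintype.card (B i) ∣ Fintype.card A := by
    obtain ⟨a⟩ := (inferInstance : Nonempty A)
    have ha : σ ^ Fintype.card A • a = a := (cyc_pow_smul σ hA _ a).mpr dvd_rfl
    obtain ⟨b, hb⟩ := hfix2 (σ ^ Fintype.card A) ⟨a, ha⟩ i
    exact (cyc_pow_smul σ (hB i) _ b).mp hb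
  exact Nat.dvd_antisymm h1 h2
end

section
/- Let G be a finite group acting transitively on finite nonempty sets X and Y with |Y| ≥ 2. Assume that every g ∈ G that fixes some point of X also fixes some point of Y. Then for every x ∈ X, the stabilizer G_x of x in G does not act transitively on Y. -/
/-- Jordan's lemma: a finite group acting transitively on a finite set of
cardinality at least 2 has a fixed-point-free element. -/
lemma jordan_aux {H Y : Type*} [Group H] [Finite H] [Finite Y]
    [MulAction H Y] [MulAction.IsPretransitive H Y]
    (hcard : 2 ≤ Nat.card Y) : ∃ h : H, ∀ y : Y, h • y ≠ y := by
  by_contra hcon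
  push_neg at hcon
  classical
  cases nonempty_fintype H
  cases nonempty_fintype Y
  have hY : Nonempty Y := by
    have : 0 < Nat.card Y := by omega
    exact Nat.card_pos_iff.mp this |>.1
  have horb : Fintype.card (MulAction.orbitRel.Quotient H Y) = 1 := by
    have : Subsingleton (MulAction.orbitRel.Quotient H Y) := by
      constructor
      intro a b
      induction a using Quotient.inductionOn' with | h ya =>
      induction b using Quotient.inductionOn' with | h yb =>
      obtain ⟨g, hg⟩ := MulAction.exists_smul_eq H yb ya
      exact Quotient.sound' ⟨g, hg⟩
    have : Nonempty (MulAction.orbitRel.Quotient H Y) := ⟨Quotient.mk (MulAction.orbitRel H Y) hY.some⟩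
    exact Fintype.card_eq_one_iff.mpr ⟨Classical.arbitrary _, fun b => Subsingleton.elim _ _⟩
  have hsum := MulAction.sum_card_fixedBy_eq_card_orbits_mul_card_group H Y
  rw [horb, one_mul] at hsum
  -- each term is ≥ 1, and the term at 1 is |Y| ≥ 2
  have hlt : ∑ h : H, (1 : ℕ) < ∑ h : H, Fintype.card (MulAction.fixedBy Y h) := by
    apply Finset.sum_lt_sum
    · intro i _
      obtain ⟨y, hy⟩ := hcon i
      exact Fintype.card_pos_iff.mpr ⟨⟨y, hy⟩⟩
    · refine ⟨1, Finset.mem_univ _, ?_⟩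
      have : Fintype.card (MulAction.fixedBy Y (1 : H)) = Fintype.card Y := by
        apply Fintype.card_congr
        apply Equiv.subtypeUnivEquiv
        intro y; exact one_smul H y
      rw [this]
      have := (Nat.card_eq_fintype_card (α := Y)) ▸ hcard
      omega
  simp only [Finset.sum_const, smul_eq_mul, mul_one, Finset.card_univ] at hlt
  omega

/-- **Remark 5.4 (dropIndec).**  If a finite group `G` acts transitively on finite
nonempty sets `X` and `Y`, `|Y| ≥ 2`, and every element of `G` fixing a point of `X`
fixes a point of `Y`, then no point stabilizer `G_x` acts transitively on `Y`. -/
theorem davenport_dropIndec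
    {G X Y : Type*} [Group G] [Finite G] [Finite X] [Finite Y] [Nonempty X]
    [MulAction G X] [MulAction G Y]
    (hcard : 2 ≤ Nat.card Y)
    [MulAction.IsPretransitive G X] [MulAction.IsPretransitive G Y]
    (hfix : ∀ g : G, (∃ x : X, g • x = x) → ∃ y : Y, g • y = y) :
    ∀ x : X, ¬ (∀ y₁ y₂ : Y, ∃ g ∈ MulAction.stabilizer G x, g • y₁ = y₂) := by
  intro x htrans
  -- the stabilizer acts on Y
  letI : MulAction.IsPretransitive (MulAction.stabilizer G x) Y := by
    constructor
    intro y₁ y₂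
    obtain ⟨g, hg, hgy⟩ := htrans y₁ y₂
    exact ⟨⟨g, hg⟩, hgy⟩
  obtain ⟨h, hh⟩ := jordan_aux (H := MulAction.stabilizer G x) (Y := Y) hcard
  obtain ⟨y, hy⟩ := hfix (h : G) ⟨x, h.2⟩
  exact hh y hy
end

section
/- Let n ≥ 2 and D ⊆ ℤ/nℤ with |D| = k ≥ 1. Let G be a subgroup of the symmetric group on ℤ/nℤ such that: (i) G is doubly transitive (for any ordered pairs (a,b), (a′,b′) of distinct elements there is g ∈ G with g(a) = a′ and g(b) = b′); (ii) the translation x ↦ x + 1 lies in G; and (iii) for every g ∈ G there exists t ∈ ℤ/nℤ with g(D) = D + t. Then (n−1) divides k(k−1), and every nonzero u ∈ ℤ/nℤ has exactly u₀ = k(k−1)/(n−1) representations as an ordered difference u = d₁ − d₂ with d₁, d₂ ∈ D. -/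
/-!
Write `N v` for the number of pairs `(d₁, d₂) ∈ D × D` with `d₁ - d₂ = v`. Since each `g ∈ G`
carries `D` onto a translate of `D`, the pairs with `g d₁ - g d₂ = v` are also counted by
`N v`, so `|G| · N v = ∑_{(x, y) ∈ D × D} #{g ∈ G | g x - g y = v}`. Splitting the inner count
by the value `a` of `g x`, the piece counting `g` with `g (x, y) = (a, a - v)` is carried
bijectively onto the one for `(a, a - w)` by left multiplication with an `h ∈ G` mapping
`(a, a - v)` to `(a, a - w)`, which double transitivity provides when `v, w ≠ 0`.
Hence `N` is constant on nonzero `v`, and since the `N v` for `v ≠ 0` sum to `k² - k`,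
the constant is `k (k - 1) / (n - 1)`.
-/

open Finset

section DifferenceCount

variable {α : Type*} [AddGroup α] [DecidableEq α]

def diffCount (D : Finset α) (v : α) : ℕ := #{p ∈ D ×ˢ D | p.1 - p.2 = v}

theorem diffCount_image_of_injective {f : α → α} (hf : Function.Injective f) (D : Finset α)
    (v : α) : diffCount (D.image f) v = #{p ∈ D ×ˢ D | f p.1 - f p.2 = v} := by
  rw [diffCount, ← prodMap_image_product, filter_image,
    card_image_of_injective _ (hf.prodMap hf)]
  rfl

theorem diffCount_image_add_right (D : Finset α) (t v : α) :
    diffCount (D.image (· + t)) v = diffCount D v := by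
  simp only [diffCount_image_of_injective (add_left_injective t), add_sub_add_right_eq_sub]
  rfl

theorem diffCount_zero (D : Finset α) : diffCount D 0 = #D := by
  rw [← diag_card, diag_eq_filter, diffCount]
  simp only [sub_eq_zero]

theorem sum_diffCount [Fintype α] (D : Finset α) : ∑ v, diffCount D v = #D * #D := by
  rw [← card_product, card_eq_sum_card_fiberwise (f := fun p => p.1 - p.2) (t := univ)
    (fun _ _ => mem_coe.2 (mem_univ _))]
  rfl

theorem card_sub_one_mul_diffCount [Fintype α] {D : Finset α}
    (hconst : ∀ v w : α, v ≠ 0 → w ≠ 0 → diffCount D v = diffCount D w) {u : α} (hu : u ≠ 0) :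
    (Fintype.card α - 1) * diffCount D u = #D * (#D - 1) := by
  have hsum : ∑ v ∈ univ.erase 0, diffCount D v = #D * (#D - 1) := by
    rw [Nat.mul_sub_one, ← sum_diffCount, ← add_sum_erase _ _ (mem_univ 0), diffCount_zero,
      Nat.add_sub_cancel_left]
  rw [← hsum, ← card_univ, ← card_erase_of_mem (mem_univ 0), ← smul_eq_mul, ← sum_const]
  exact sum_congr rfl fun v hv => hconst u v hu (ne_of_mem_erase hv)

end DifferenceCount

section DoublyTransitive

variable {G α : Type*} [Group G] [Fintype G]

theorem card_filter_smul_eq_of_smul_eq {β : Type*} [MulAction G β] [DecidableEq β] {q q' : β}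
    (h : G) (hq : h • q = q') (p : β) : #{g : G | g • p = q} = #{g : G | g • p = q'} :=
  card_equiv (Equiv.mulLeft h) fun g => by simp [mul_smul, ← hq]

variable [MulAction G α] [AddCommGroup α] [Fintype α] [DecidableEq α]

theorem card_filter_smul_sub_smul_eq_sum (x y v : α) :
    #{g : G | g • x - g • y = v} = ∑ a, #{g : G | g • (x, y) = (a, a - v)} := by
  rw [card_eq_sum_card_fiberwise (f := fun g : G => g • x) (t := univ)
    (fun _ _ => mem_coe.2 (mem_univ _))]
  refine sum_congr rfl fun a _ => ?_
  rw [filter_filter]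
  congr! 2 with g
  simp only [Prod.smul_mk, Prod.mk.injEq]
  constructor
  · rintro ⟨hv, rfl⟩
    exact ⟨rfl, by rw [← hv, sub_sub_cancel]⟩
  · rintro ⟨rfl, hy⟩
    exact ⟨by rw [hy, sub_sub_cancel], rfl⟩

theorem card_filter_smul_sub_smul_eq
    (hG : ∀ a b a' b' : α, a ≠ b → a' ≠ b' → ∃ g : G, g • a = a' ∧ g • b = b')
    (x y : α) {v w : α} (hv : v ≠ 0) (hw : w ≠ 0) :
    #{g : G | g • x - g • y = v} = #{g : G | g • x - g • y = w} := by
  rw [card_filter_smul_sub_smul_eq_sum, card_filter_smul_sub_smul_eq_sum]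
  refine sum_congr rfl fun a _ => ?_
  obtain ⟨h, ha, hav⟩ := hG a (a - v) a (a - w) (fun h => hv (sub_eq_self.1 h.symm))
    (fun h => hw (sub_eq_self.1 h.symm))
  exact card_filter_smul_eq_of_smul_eq h (by rw [Prod.smul_mk, ha, hav]) _

theorem diffCount_eq_of_ne_zero
    (hG : ∀ a b a' b' : α, a ≠ b → a' ≠ b' → ∃ g : G, g • a = a' ∧ g • b = b')
    {D : Finset α} (hD : ∀ g : G, ∃ t, D.image (g • ·) = D.image (· + t))
    {v w : α} (hv : v ≠ 0) (hw : w ≠ 0) : diffCount D v = diffCount D w := by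
  have key : ∀ v, Fintype.card G * diffCount D v =
      ∑ p ∈ D ×ˢ D, #{g : G | g • p.1 - g • p.2 = v} := fun v => calc
    Fintype.card G * diffCount D v = ∑ g : G, #{p ∈ D ×ˢ D | g • p.1 - g • p.2 = v} := by
      rw [← smul_eq_mul, ← card_univ, ← sum_const]
      refine sum_congr rfl fun g _ => ?_
      obtain ⟨t, ht⟩ := hD g
      rw [← diffCount_image_of_injective (MulAction.injective g), ht, diffCount_image_add_right]
    _ = _ := by
      simp only [card_filter]
      exact sum_comm
  refine Nat.eq_of_mul_eq_mul_left Fintype.card_pos ((key v).trans ?_)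
  rw [key w]
  exact sum_congr rfl fun p _ => card_filter_smul_sub_smul_eq hG p.1 p.2 hv hw

end DoublyTransitive

theorem davenport_DS3_general
    (n : ℕ) (hn : 2 ≤ n) (D : Finset (ZMod n)) (k : ℕ) (hkcard : D.card = k)
    (G : Subgroup (Equiv.Perm (ZMod n)))
    (hdoubly : ∀ a b a' b' : ZMod n, a ≠ b → a' ≠ b' → ∃ g ∈ G, g a = a' ∧ g b = b')
    (hDtranslate : ∀ g ∈ G, ∃ t : ZMod n, D.image g = D.image (fun d => d + t)) :
    (n - 1) ∣ k * (k - 1) ∧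
      ∀ u : ZMod n, u ≠ 0 →
        ((D ×ˢ D).filter (fun p => p.1 - p.2 = u)).card = k * (k - 1) / (n - 1) := by
  classical
  have : NeZero n := ⟨by omega⟩
  have hconst : ∀ v w : ZMod n, v ≠ 0 → w ≠ 0 → diffCount D v = diffCount D w :=
    fun v w => diffCount_eq_of_ne_zero (G := G)
      (fun a b a' b' hab hab' => by
        obtain ⟨g, hg, h⟩ := hdoubly a b a' b' hab hab'
        exact ⟨⟨g, hg⟩, h⟩)
      (fun g => hDtranslate g g.2)
  have hkey : ∀ u : ZMod n, u ≠ 0 → (n - 1) * diffCount D u = k * (k - 1) := fun u hu => by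
    simpa [ZMod.card, hkcard] using card_sub_one_mul_diffCount hconst hu
  have h10 : (1 : ZMod n) ≠ 0 := by
    have : Fact (1 < n) := ⟨hn⟩
    exact one_ne_zero
  refine ⟨⟨_, (hkey 1 h10).symm⟩, fun u hu => ?_⟩
  rw [← hkey u hu, Nat.mul_div_cancel_left _ (by omega)]
  rfl

/-- **Proposition 5.5 (DS3), first statement.**  Let `D ⊆ ℤ/nℤ` with `|D| = k ≥ 1`,
`n ≥ 2`, and let `G` be a doubly transitive subgroup of `Sym(ℤ/nℤ)` containing the
translation `x ↦ x + 1` such that every `g ∈ G` maps `D` to a translate of `D`.  Then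
`(n-1) ∣ k(k-1)` and every nonzero `u ∈ ℤ/nℤ` has exactly `k(k-1)/(n-1)` representations
as an ordered difference `d₁ - d₂` with `d₁, d₂ ∈ D`. -/
theorem davenport_DS3
    (n : ℕ) (hn : 2 ≤ n) (D : Finset (ZMod n)) (k : ℕ) (hkcard : D.card = k) (hk : 1 ≤ k)
    (G : Subgroup (Equiv.Perm (ZMod n)))
    (hdoubly : ∀ a b a' b' : ZMod n, a ≠ b → a' ≠ b' → ∃ g ∈ G, g a = a' ∧ g b = b')
    (htrans : Equiv.addLeft (1 : ZMod n) ∈ G)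
    (hDtranslate : ∀ g ∈ G, ∃ t : ZMod n, D.image g = D.image (fun d => d + t)) :
    (n - 1) ∣ k * (k - 1) ∧
      ∀ u : ZMod n, u ≠ 0 →
        ((D ×ˢ D).filter (fun p => p.1 - p.2 = u)).card = k * (k - 1) / (n - 1) :=
  davenport_DS3_general n hn D k hkcard G hdoubly hDtranslate
end

section
/- Let n, k, u be positive integers with 2 ≤ k and 2k ≤ n − 1, and let D ⊆ ℤ/nℤ be an (n,k,u)-difference set. Then −1 is not a multiplier of D: for every t ∈ ℤ/nℤ, the set −D = { −d : d ∈ D } is not equal to the translate D + t. -/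
/-!
If `-D = D + t`, then `σ d = -d - t` permutes `D`, and `(a, b) ↦ (σ b, σ a)` is an involution on
the pairs of `D` with difference `x` whose fixed points correspond to the `d ∈ D` with
`d + d = x - t`. So for every `y ≠ -t` the number of `d ∈ D` with `d + d = y` is congruent to `u`
modulo 2. If `u` is odd, every `y ≠ -t` is such a double, so `k ≥ n - 1`. If `u` is even, every
`d ∈ D` with `d + d ≠ -t` has a partner `d' ≠ d` in `D` with `d' + d' = d + d`; in a cyclic group
`d' - d` is then the unique element `c` of order two, so `d ↦ (d + c, d)` gives at least `k - 2`
representations of `c`, whereas `k (k - 1) = u (n - 1)` and `2k ≤ n - 1` give `2u < k`.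
-/

open Finset

theorem Finset.card_modEq_card_filter_fixed {α : Type*} [DecidableEq α] (s : Finset α) (f : α → α)
    (hf : ∀ a ∈ s, f a ∈ s) (hff : ∀ a ∈ s, f (f a) = a) :
    #s ≡ #{a ∈ s | f a = a} [MOD 2] := by
  have hmoved : Even #{a ∈ s | ¬f a = a} := by
    rw [← ZMod.natCast_eq_zero_iff_even, Finset.cast_card]
    refine sum_involution (fun a _ => f a) (fun _ _ => by decide)
      (fun a ha _ => (mem_filter.1 ha).2) (fun a ha => ?_) (fun a ha => hff a (mem_filter.1 ha).1)
    obtain ⟨has, hfa⟩ := mem_filter.1 ha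
    exact mem_filter.2 ⟨hf a has, fun h => hfa (by rw [hff a has] at h; exact h.symm)⟩
  obtain ⟨m, hm⟩ := hmoved
  have := card_filter_add_card_filter_not (s := s) (fun a => f a = a)
  unfold Nat.ModEq
  omega

section DifferenceSet

variable {G : Type*} [AddCommGroup G] [DecidableEq G]

def IsDifferenceSet (D : Finset G) (u : ℕ) : Prop :=
  ∀ x ≠ 0, #{p ∈ D ×ˢ D | p.1 - p.2 = x} = u

theorem card_filter_sub_eq_zero (D : Finset G) : #{p ∈ D ×ˢ D | p.1 - p.2 = 0} = #D := by
  refine card_nbij' Prod.fst (fun d => (d, d)) ?_ ?_ ?_ ?_ <;> intro p hp <;>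
    simp_all [sub_eq_zero, Prod.ext_iff]

theorem IsDifferenceSet.card_mul_card_eq [Fintype G] {D : Finset G} {u : ℕ}
    (hD : IsDifferenceSet D u) : #D * #D = #D + u * (Fintype.card G - 1) := by
  have hsum := card_eq_sum_card_fiberwise (s := D ×ˢ D) (t := univ)
    (f := fun p => p.1 - p.2) (fun _ _ => mem_univ _)
  rw [card_product, ← add_sum_erase _ _ (mem_univ 0), card_filter_sub_eq_zero,
    sum_congr rfl (fun x hx => hD x (ne_of_mem_erase hx)), sum_const,
    card_erase_of_mem (mem_univ _), card_univ, smul_eq_mul, mul_comm (Fintype.card G - 1)] at hsum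
  exact hsum

theorem neg_sub_mem_of_image_neg_eq_image_add_right {D : Finset G} {t : G}
    (h : D.image (fun d => -d) = D.image (fun d => d + t)) : ∀ d ∈ D, -d - t ∈ D := by
  intro d hd
  obtain ⟨e, he, hed⟩ := mem_image.1 (h ▸ mem_image_of_mem (fun d => -d) hd)
  rwa [← hed, add_sub_cancel_right]

theorem card_filter_sub_eq_modEq_card_filter_add_self_eq {D : Finset G} {t : G}
    (hσ : ∀ d ∈ D, -d - t ∈ D) (x : G) :
    #{p ∈ D ×ˢ D | p.1 - p.2 = x} ≡ #{d ∈ D | d + d = x - t} [MOD 2] := by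
  let τ : G × G → G × G := fun p => (-p.2 - t, -p.1 - t)
  have hτ : ∀ p ∈ {p ∈ D ×ˢ D | p.1 - p.2 = x}, τ p ∈ {p ∈ D ×ˢ D | p.1 - p.2 = x} := by
    intro p hp
    simp only [mem_filter, mem_product] at hp ⊢
    refine ⟨⟨hσ _ hp.1.2, hσ _ hp.1.1⟩, ?_⟩
    rw [← hp.2]
    simp only [τ]
    abel
  have hττ : ∀ p ∈ {p ∈ D ×ˢ D | p.1 - p.2 = x}, τ (τ p) = p := by
    intro p _
    ext <;> simp [τ]
  have hfixed : #{p ∈ {p ∈ D ×ˢ D | p.1 - p.2 = x} | τ p = p} = #{d ∈ D | d + d = x - t} := by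
    refine card_nbij' Prod.fst (fun d => (d, -d - t)) ?_ ?_ ?_ ?_ <;> intro p hp
    all_goals simp only [coe_filter, Set.mem_ofPred_eq, τ, Prod.ext_iff] at hp ⊢
    · obtain ⟨hpx, -, hp₂⟩ := hp
      rw [mem_filter, mem_product] at hpx
      refine ⟨hpx.1.1, ?_⟩
      rw [← hpx.2, ← hp₂]
      abel
    · refine ⟨mem_filter.2 ⟨mem_product.2 ⟨hp.1, hσ _ hp.1⟩, ?_⟩, by abel, trivial⟩
      rw [← eq_sub_iff_add_eq.1 hp.2]
      dsimp only
      abel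
    · exact ⟨trivial, hp.2.2⟩
  rw [← hfixed]
  exact card_modEq_card_filter_fixed _ τ hτ hττ

theorem IsDifferenceSet.card_filter_add_self_eq_modEq {D : Finset G} {u : ℕ} {t y : G}
    (hD : IsDifferenceSet D u) (hσ : ∀ d ∈ D, -d - t ∈ D) (hy : y ≠ -t) :
    #{d ∈ D | d + d = y} ≡ u [MOD 2] := by
  have hx : y + t ≠ 0 := fun h => hy (eq_neg_of_add_eq_zero_left h)
  simpa [hD _ hx] using (card_filter_sub_eq_modEq_card_filter_add_self_eq hσ (y + t)).symm

theorem IsDifferenceSet.card_sub_one_le_card_of_odd [Fintype G] {D : Finset G} {u : ℕ} {t : G}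
    (hD : IsDifferenceSet D u) (hσ : ∀ d ∈ D, -d - t ∈ D) (hu : Odd u) :
    Fintype.card G - 1 ≤ #D := by
  have hhalf : univ.erase (-t) ⊆ D.image (fun d => d + d) := by
    intro y hy
    have hodd : Odd #{d ∈ D | d + d = y} :=
      Nat.odd_iff.2 (Eq.trans (hD.card_filter_add_self_eq_modEq hσ (ne_of_mem_erase hy))
        (Nat.odd_iff.1 hu))
    obtain ⟨d, hd⟩ := card_pos.1 hodd.pos
    exact mem_image.2 ⟨d, (mem_filter.1 hd).1, (mem_filter.1 hd).2⟩
  calc Fintype.card G - 1 = #(univ.erase (-t)) := by rw [card_erase_of_mem (mem_univ _), card_univ]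
    _ ≤ #(D.image (fun d => d + d)) := card_le_card hhalf
    _ ≤ #D := card_image_le

section Cyclic

variable [Fintype G] [IsAddCyclic G]

theorem card_filter_add_self_eq_le_two (s : Finset G) (y : G) : #{d ∈ s | d + d = y} ≤ 2 := by
  rcases (s.filter (fun d => d + d = y)).eq_empty_or_nonempty with h | ⟨d₀, hd₀⟩
  · simp [h]
  calc #{d ∈ s | d + d = y} ≤ #{a : G | 2 • a = 0} := by
        refine card_le_card_of_injOn (· - d₀) (fun d hd => ?_)
          (fun a _ b _ h => sub_left_injective h)
        simp only [coe_filter, Set.mem_ofPred_eq, mem_filter, mem_univ, true_and] at hd hd₀ ⊢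
        rw [two_nsmul, sub_add_sub_comm, hd.2, hd₀.2, sub_self]
    _ ≤ 2 := by
        convert IsAddCyclic.card_nsmul_eq_zero_le (α := G) two_pos using 2

theorem eq_of_add_self_eq_zero {x y : G} (hx : x + x = 0) (hy : y + y = 0) (hx0 : x ≠ 0)
    (hy0 : y ≠ 0) : x = y := by
  by_contra hxy
  have h3 : #({0, x, y} : Finset G) = 3 := card_eq_three.2 ⟨0, x, y, hx0.symm, hy0.symm, hxy, rfl⟩
  have h2 := card_filter_add_self_eq_le_two ({0, x, y} : Finset G) 0
  rw [filter_true_of_mem (by simp [hx, hy])] at h2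
  omega

theorem IsDifferenceSet.card_le_add_two_of_even {D : Finset G} {u : ℕ} {t : G}
    (hD : IsDifferenceSet D u) (hσ : ∀ d ∈ D, -d - t ∈ D) (hu : Even u) : #D ≤ u + 2 := by
  have hpartner : ∀ d ∈ D, ¬d + d = -t → ∃ d' ∈ D, d' ≠ d ∧ d' + d' = d + d := by
    intro d hd hdt
    have hmod : _ % 2 = u % 2 := hD.card_filter_add_self_eq_modEq hσ hdt
    have hpos : 0 < #{e ∈ D | e + e = d + d} := card_pos.2 ⟨d, mem_filter.2 ⟨hd, rfl⟩⟩
    obtain ⟨m, rfl⟩ := hu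
    obtain ⟨d', hd', hne⟩ := exists_mem_ne (show 1 < #{e ∈ D | e + e = d + d} by omega) d
    exact ⟨d', (mem_filter.1 hd').1, hne, (mem_filter.1 hd').2⟩
  have hmoved : #{d ∈ D | ¬d + d = -t} ≤ u := by
    rcases (D.filter (fun d => ¬d + d = -t)).eq_empty_or_nonempty with h | ⟨d₀, hd₀⟩
    · simp [h]
    obtain ⟨hd₀D, hd₀t⟩ := mem_filter.1 hd₀
    obtain ⟨d₀', -, hne₀, hdbl₀⟩ := hpartner d₀ hd₀D hd₀t
    have hc0 : d₀' - d₀ ≠ 0 := sub_ne_zero.2 hne₀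
    have hc : d₀' - d₀ + (d₀' - d₀) = 0 := by rw [sub_add_sub_comm, hdbl₀, sub_self]
    rw [← hD _ hc0]
    refine card_le_card_of_injOn (fun d => (d + (d₀' - d₀), d)) (fun d hd => ?_)
      (fun a _ b _ h => congrArg Prod.snd h)
    obtain ⟨hdD, hdt⟩ := mem_filter.1 hd
    obtain ⟨d', hd'D, hne, hdbl⟩ := hpartner d hdD hdt
    have hshift : d' - d = d₀' - d₀ :=
      eq_of_add_self_eq_zero (by rw [sub_add_sub_comm, hdbl, sub_self]) hc (sub_ne_zero.2 hne) hc0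
    rw [← hshift]
    simp [hd'D, hdD]
  have hfixed := card_filter_add_self_eq_le_two D (-t)
  have := card_filter_add_card_filter_not (s := D) (fun d => d + d = -t)
  omega

theorem IsDifferenceSet.image_neg_ne_image_add_right {D : Finset G} {u : ℕ}
    (hD : IsDifferenceSet D u) (hk : 2 ≤ #D) (h2k : 2 * #D ≤ Fintype.card G - 1) (t : G) :
    D.image (fun d => -d) ≠ D.image (fun d => d + t) := by
  intro h
  have hσ := neg_sub_mem_of_image_neg_eq_image_add_right h
  have hcount := hD.card_mul_card_eq
  rcases Nat.even_or_odd u with hu | hu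
  · have hle := hD.card_le_add_two_of_even hσ hu
    have hu2 : 2 * u + 1 ≤ #D := by nlinarith
    obtain ⟨m, rfl⟩ := hu
    obtain rfl : m = 0 := by omega
    nlinarith
  · have := hD.card_sub_one_le_card_of_odd hσ hu
    omega

end Cyclic

end DifferenceSet

theorem davenport_storer_general
    (n k u : ℕ) (hk : 2 ≤ k) (h2k : 2 * k ≤ n - 1)
    (D : Finset (ZMod n)) (hcard : D.card = k)
    (hdiff : ∀ x : ZMod n, x ≠ 0 →
      ((D ×ˢ D).filter (fun p => p.1 - p.2 = x)).card = u) :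
    ∀ t : ZMod n, D.image (fun d => -d) ≠ D.image (fun d => d + t) := by
  have : NeZero n := ⟨by omega⟩
  subst hcard
  exact IsDifferenceSet.image_neg_ne_image_add_right hdiff hk (by rwa [ZMod.card])

/-- **Proposition 6.1 (Storer's Statement).**  `-1` is not a multiplier of a nontrivial
`(n,k,u)`-difference set `D ⊆ ℤ/nℤ` (with `2 ≤ k` and `2k ≤ n - 1`): no translate of `D`
equals `-D`. -/
theorem davenport_storer
    (n k u : ℕ) (hn : 0 < n) (hk : 2 ≤ k) (hu : 0 < u) (h2k : 2 * k ≤ n - 1)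
    (D : Finset (ZMod n)) (hcard : D.card = k)
    (hdiff : ∀ x : ZMod n, x ≠ 0 →
      ((D ×ˢ D).filter (fun p => p.1 - p.2 = x)).card = u) :
    ∀ t : ZMod n, D.image (fun d => -d) ≠ D.image (fun d => d + t) :=
  davenport_storer_general n k u hk h2k D hcard hdiff
end

section
/- Let F be a finite field and V a finite-dimensional F-vector space of dimension v + 1 with v ≥ 1, and let g be an F-linear automorphism of V. Then the number of one-dimensional subspaces W ≤ V with g(W) = W equals the number of v-dimensional (codimension-one) subspaces H ≤ V with g(H) = H. -/
/-!
A line is invariant under `g` exactly when it lies in an eigenspace of `g`, and in only one, so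
the invariant lines are counted eigenvalue by eigenvalue by the lines of the eigenspaces. The
`μ`-eigenspace of the transpose `gᵀ` is the kernel of `(g - μ)ᵀ`, which has the same dimension as
the kernel of `g - μ`; hence `g` and `gᵀ` have equally many invariant lines. Finally, the
annihilator `H ↦ H⁰` matches the `g`-invariant hyperplanes with the `gᵀ`-invariant lines of the
dual space.
-/

open Module

section

variable {R M N : Type*} [Ring R] [AddCommGroup M] [Module R M] [AddCommGroup N] [Module R N]

def Submodule.finrankEqEquivFinrankEqLe (p : Submodule R M) (k : ℕ) :
    {W : Submodule R p // finrank R W = k} ≃ {W : Submodule R M // finrank R W = k ∧ W ≤ p} where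
  toFun W := ⟨W.1.map p.subtype, by rw [finrank_map_subtype_eq, W.2], map_subtype_le p W.1⟩
  invFun W := ⟨W.1.comap p.subtype, by rw [(comapSubtypeEquivOfLe W.2.2).finrank_eq, W.2.1]⟩
  left_inv W := Subtype.ext (comap_map_eq_of_injective p.injective_subtype W.1)
  right_inv W := Subtype.ext ((map_comap_subtype p W.1).trans (inf_eq_right.2 W.2.2))

def LinearEquiv.finrankEqSubmoduleCongr (e : M ≃ₗ[R] N) (k : ℕ) :
    {W : Submodule R M // finrank R W = k} ≃ {W : Submodule R N // finrank R W = k} :=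
  (Submodule.orderIsoMapComap e).toEquiv.subtypeEquiv fun W => by
    rw [← e.finrank_map_eq W]; rfl

end

section

variable {K V V' : Type*} [Field K] [AddCommGroup V] [Module K V] [AddCommGroup V'] [Module K V']

noncomputable def Submodule.finrankEqLeCongr (p : Submodule K V) (q : Submodule K V')
    [FiniteDimensional K p] [FiniteDimensional K q] (h : finrank K p = finrank K q) (k : ℕ) :
    {W : Submodule K V // finrank K W = k ∧ W ≤ p} ≃
      {W : Submodule K V' // finrank K W = k ∧ W ≤ q} :=
  (p.finrankEqEquivFinrankEqLe k).symm.trans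
    (((LinearEquiv.ofFinrankEq p q h).finrankEqSubmoduleCongr k).trans
      (q.finrankEqEquivFinrankEqLe k))

theorem LinearMap.finrank_ker_dualMap [FiniteDimensional K V] (f : Module.End K V) :
    finrank K (ker f.dualMap) = finrank K (ker f) := by
  have hker := Subspace.finrank_add_finrank_dualAnnihilator_eq (range f)
  have hrank := f.finrank_range_add_finrank_ker
  rw [← ker_dualMap_eq_dualAnnihilator_range] at hker
  omega

namespace Module.End

theorem finrank_eigenspace_dualMap [FiniteDimensional K V] (f : End K V) (μ : K) :
    finrank K (eigenspace f.dualMap μ) = finrank K (f.eigenspace μ) := by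
  have hdual : f.dualMap - μ • 1 = (f - μ • 1).dualMap := by
    ext φ x
    simp
  rw [eigenspace_def, eigenspace_def, hdual, LinearMap.finrank_ker_dualMap]

theorem mem_invtSubmodule_iff_exists_le_eigenspace {f : End K V} {W : Submodule K V}
    (hW : finrank K W = 1) : W ∈ f.invtSubmodule ↔ ∃ μ, W ≤ f.eigenspace μ := by
  refine ⟨fun hf => ?_, fun ⟨μ, hμ⟩ => ?_⟩
  · obtain ⟨μ, hμ, -⟩ := (f.restrict hf).existsUnique_eq_smul_id_of_finrank_eq_one hW
    exact ⟨μ, fun x hx => mem_eigenspace_iff.2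
      (congrArg Subtype.val (LinearMap.congr_fun hμ ⟨x, hx⟩))⟩
  · refine (mem_invtSubmodule_iff_forall_mem_of_mem f).2 fun x hx => ?_
    rw [mem_eigenspace_iff.1 (hμ hx)]
    exact W.smul_mem μ hx

theorem eq_of_le_eigenspace_of_le_eigenspace {f : End K V} {W : Submodule K V} (hW : W ≠ ⊥)
    {μ ν : K} (hμ : W ≤ f.eigenspace μ) (hν : W ≤ f.eigenspace ν) : μ = ν := by
  obtain ⟨x, hx, hx0⟩ := W.exists_mem_ne_zero_of_ne_bot hW
  exact smul_left_injective K hx0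
    ((mem_eigenspace_iff.1 (hμ hx)).symm.trans (mem_eigenspace_iff.1 (hν hx)))

noncomputable def invtLinesEquivSigmaEigenspace (f : End K V) :
    {W : Submodule K V // finrank K W = 1 ∧ W ∈ f.invtSubmodule} ≃
      Σ μ : K, {W : Submodule K V // finrank K W = 1 ∧ W ≤ f.eigenspace μ} := by
  refine (Equiv.ofBijective (fun p => ⟨p.2.1, p.2.2.1,
    (mem_invtSubmodule_iff_exists_le_eigenspace p.2.2.1).2 ⟨p.1, p.2.2.2⟩⟩) ⟨?_, ?_⟩).symm
  · rintro ⟨μ, W, hW, hμ⟩ ⟨ν, W', hW', hν⟩ h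
    obtain rfl : W = W' := congrArg Subtype.val h
    obtain rfl : μ = ν := eq_of_le_eigenspace_of_le_eigenspace
      (fun h => by rw [h, finrank_bot] at hW; exact zero_ne_one hW) hμ hν
    rfl
  · rintro ⟨W, hW, hf⟩
    obtain ⟨μ, hμ⟩ := (mem_invtSubmodule_iff_exists_le_eigenspace hW).1 hf
    exact ⟨⟨μ, W, hW, hμ⟩, rfl⟩

end Module.End

theorem Submodule.dualAnnihilator_mem_invtSubmodule_dualMap {f : Module.End K V}
    {W : Submodule K V} (hW : W ∈ f.invtSubmodule) :
    W.dualAnnihilator ∈ Module.End.invtSubmodule f.dualMap := by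
  refine (Module.End.mem_invtSubmodule_iff_forall_mem_of_mem _).2 fun φ hφ => ?_
  rw [mem_dualAnnihilator] at hφ ⊢
  exact fun x hx => hφ (f x) (hW hx)

theorem Submodule.dualCoannihilator_mem_invtSubmodule {f : Module.End K V}
    {Φ : Submodule K (Dual K V)} (hΦ : Φ ∈ Module.End.invtSubmodule f.dualMap) :
    Φ.dualCoannihilator ∈ f.invtSubmodule := by
  refine (Module.End.mem_invtSubmodule_iff_forall_mem_of_mem _).2 fun x hx => ?_
  rw [mem_dualCoannihilator] at hx ⊢
  exact fun φ hφ => hx (f.dualMap φ) (hΦ hφ)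

namespace Module.End

variable [FiniteDimensional K V]

noncomputable def invtSubmoduleDualAnnihilatorEquiv (f : End K V) {k m : ℕ}
    (hkm : k + m = finrank K V) :
    {W : Submodule K V // finrank K W = k ∧ W ∈ f.invtSubmodule} ≃
      {Φ : Submodule K (Dual K V) // finrank K Φ = m ∧ Φ ∈ invtSubmodule f.dualMap} where
  toFun W := ⟨W.1.dualAnnihilator,
    by have := Subspace.finrank_add_finrank_dualAnnihilator_eq W.1; have := W.2.1; omega,
    W.1.dualAnnihilator_mem_invtSubmodule_dualMap W.2.2⟩
  invFun Φ := ⟨Φ.1.dualCoannihilator,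
    by have := Subspace.finrank_add_finrank_dualCoannihilator_eq Φ.1; have := Φ.2.1; omega,
    Φ.1.dualCoannihilator_mem_invtSubmodule Φ.2.2⟩
  left_inv W := Subtype.ext Subspace.dualAnnihilator_dualCoannihilator_eq
  right_inv Φ := Subtype.ext Subspace.dualCoannihilator_dualAnnihilator_eq

noncomputable def invtLinesEquivInvtHyperplanes (f : End K V) {n : ℕ}
    (hn : finrank K V = n + 1) :
    {W : Submodule K V // finrank K W = 1 ∧ W ∈ f.invtSubmodule} ≃
      {W : Submodule K V // finrank K W = n ∧ W ∈ f.invtSubmodule} :=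
  f.invtLinesEquivSigmaEigenspace.trans <|
    (Equiv.sigmaCongrRight fun μ => Submodule.finrankEqLeCongr _ _
      (f.finrank_eigenspace_dualMap μ).symm 1).trans <|
    (invtLinesEquivSigmaEigenspace f.dualMap).symm.trans
      (f.invtSubmoduleDualAnnihilatorEquiv (by omega)).symm

end Module.End

theorem LinearEquiv.map_eq_self_iff_mem_invtSubmodule (e : V ≃ₗ[K] V) {W : Submodule K V}
    [FiniteDimensional K W] : W.map (e : V →ₗ[K] V) = W ↔ W ∈ Module.End.invtSubmodule e :=
  ⟨fun h => (Module.End.mem_invtSubmodule_iff_map_le _).2 h.le, fun h =>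
    Submodule.eq_of_le_of_finrank_eq ((Module.End.mem_invtSubmodule_iff_map_le _).1 h)
      (e.finrank_map_eq W)⟩

end

theorem davenport_pointsHyperplanes_general
    {F V : Type*} [Field F] [AddCommGroup V] [Module F V]
    (v : ℕ) (hdim : Module.finrank F V = v + 1)
    (g : V ≃ₗ[F] V) :
    Nat.card {W : Submodule F V //
        Module.finrank F W = 1 ∧ W.map (g : V →ₗ[F] V) = W} =
      Nat.card {W : Submodule F V //
        Module.finrank F W = v ∧ W.map (g : V →ₗ[F] V) = W} := by
  have : FiniteDimensional F V := .of_finrank_pos (by omega)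
  have mapEqSelfEquiv (k : ℕ) :
      {W : Submodule F V // finrank F W = k ∧ W.map (g : V →ₗ[F] V) = W} ≃
        {W : Submodule F V // finrank F W = k ∧ W ∈ Module.End.invtSubmodule (g : V →ₗ[F] V)} :=
    Equiv.subtypeEquivRight fun W => and_congr_right fun _ => g.map_eq_self_iff_mem_invtSubmodule
  exact Nat.card_congr ((mapEqSelfEquiv 1).trans
    ((Module.End.invtLinesEquivInvtHyperplanes (g : V →ₗ[F] V) hdim).trans
      (mapEqSelfEquiv v).symm))

/-- **§5.3: points vs. hyperplanes.**  For a linear automorphism `g` of a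
`(v+1)`-dimensional vector space `V` over a finite field `F` (`v ≥ 1`), the number of
`g`-invariant one-dimensional subspaces equals the number of `g`-invariant
`v`-dimensional (codimension-one) subspaces. -/
theorem davenport_pointsHyperplanes
    {F V : Type*} [Field F] [Fintype F] [AddCommGroup V] [Module F V]
    (v : ℕ) (hv : 1 ≤ v) (hdim : Module.finrank F V = v + 1)
    (g : V ≃ₗ[F] V) :
    Nat.card {W : Submodule F V //
        Module.finrank F W = 1 ∧ W.map (g : V →ₗ[F] V) = W} =
      Nat.card {W : Submodule F V //
        Module.finrank F W = v ∧ W.map (g : V →ₗ[F] V) = W} :=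
  davenport_pointsHyperplanes_general v hdim g
end

section
/- Let K be a field and f ∈ K[X] of degree n ≥ 1 with n not divisible by the characteristic of K. Suppose f decomposes over an algebraic closure K̄ of K: there are g, h ∈ K̄[X] with deg g ≥ 2, deg h ≥ 2 and f = g ∘ h in K̄[X]. Then f decomposes over K: there are g′, h′ ∈ K[X] with deg g′ = deg g, deg h′ = deg h and f = g′ ∘ h′. -/
open Polynomial

/-!
Replacing `h` by `(h - h(0)) / lc(h)` and `g` by its composition with the inverse affine map,
we may assume `h` monic with `h(0) = 0`. Let `m = deg g`, `k = deg h`. The coefficients of `h`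
are then shown to lie in `K` from the top down: if `q ∈ K[X]` agrees with `h` above degree `d`,
where `0 < d < k`, compare coefficients of `X ^ ((m - 1) k + d)`. In `g ∘ h` only the leading
term of `g` reaches that degree, so `lc(g) · coeff(h ^ m) = coeff(f)` lies in `K`; and
`h ^ m - q ^ m = (h - q) · ∑ hⁱ q^(m-1-i)` has there the coefficient `m · lc(h - q)`. Since `m`
is invertible, the next coefficient of `h` lies in `K`. Once `h ∈ K[X]`, the identity
`g ∘ h = g(0) + h · (((g - g(0)) / X) ∘ h)` shows that division with remainder by `h` over `K`
recovers the coefficients of `g` one at a time, so `g ∈ K[X]` as well.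
-/

namespace Polynomial

theorem Monic.coeff_pow_sub_pow {R : Type*} [CommRing R] {p q : R[X]} (hp : p.Monic)
    (hq : q.Monic) (hpq : p.natDegree = q.natDegree) (m : ℕ) :
    (p ^ m - q ^ m).coeff ((m - 1) * p.natDegree + (p - q).natDegree) =
      m * (p - q).leadingCoeff := by
  nontriviality R
  have hterm : ∀ i ∈ Finset.range m, (p ^ i * q ^ (m - 1 - i)).Monic ∧
      (p ^ i * q ^ (m - 1 - i)).natDegree = (m - 1) * p.natDegree := by
    intro i hi
    have hi : i + (m - 1 - i) = m - 1 := by have := Finset.mem_range.mp hi; omega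
    refine ⟨(hp.pow i).mul (hq.pow _), ?_⟩
    rw [(hp.pow i).natDegree_mul (hq.pow _), hp.natDegree_pow, hq.natDegree_pow, ← hpq,
      ← add_mul, hi]
  have hsum_deg : (∑ i ∈ Finset.range m, p ^ i * q ^ (m - 1 - i)).natDegree ≤
      (m - 1) * p.natDegree :=
    natDegree_sum_le_of_forall_le _ _ fun i hi => (hterm i hi).2.le
  have hsum_coeff : (∑ i ∈ Finset.range m, p ^ i * q ^ (m - 1 - i)).coeff
      ((m - 1) * p.natDegree) = m := by
    rw [finsetSum_coeff,
      Finset.sum_congr rfl fun i hi => (hterm i hi).2 ▸ (hterm i hi).1.coeff_natDegree]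
    simp
  rw [← geom_sum₂_mul, coeff_mul_add_eq_of_natDegree_le hsum_deg le_rfl, hsum_coeff]
  rfl

theorem coeff_comp_eq_leadingCoeff_mul_coeff_pow {R : Type*} [Semiring R] {p q : R[X]} {n : ℕ}
    (hn : (p.natDegree - 1) * q.natDegree < n) :
    (p.comp q).coeff n = p.leadingCoeff * (q ^ p.natDegree).coeff n := by
  have hlow : (p.eraseLead.comp q).natDegree < n :=
    natDegree_comp_le.trans_lt <|
      (Nat.mul_le_mul_right _ (eraseLead_natDegree_le p)).trans_lt hn
  conv_lhs => rw [← eraseLead_add_C_mul_X_pow p]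
  rw [add_comp, coeff_add, coeff_eq_zero_of_natDegree_lt hlow, zero_add, C_mul_comp, X_pow_comp,
    coeff_C_mul]

theorem exists_linear_comp_monic_eq {K : Type*} [Field K] (h : K[X]) (hh : h.natDegree ≠ 0) :
    ∃ L h₁ : K[X], L.natDegree = 1 ∧ h₁.Monic ∧ h₁.coeff 0 = 0 ∧ L.comp h₁ = h := by
  have hc : h.leadingCoeff ≠ 0 := leadingCoeff_ne_zero.mpr (by rintro rfl; simp at hh)
  refine ⟨C h.leadingCoeff * X + C (h.coeff 0), C h.leadingCoeff⁻¹ * (h - C (h.coeff 0)),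
    natDegree_linear hc, ?_, by simp, ?_⟩
  · have hC : (C (h.coeff 0)).degree < h.degree :=
      degree_C_le.trans_lt (natDegree_pos_iff_degree_pos.mp (Nat.pos_of_ne_zero hh))
    rw [Monic, leadingCoeff_mul, leadingCoeff_C, leadingCoeff_sub_of_degree_lt hC,
      inv_mul_cancel₀ hc]
  · simp only [add_comp, mul_comp, C_comp, X_comp, ← mul_assoc, ← C_mul, mul_inv_cancel₀ hc,
      C_1, one_mul, sub_add_cancel]

theorem mem_lifts_of_comp_mem_lifts {F E : Type*} [CommRing F] [CommRing E] (φ : F →+* E)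
    {H : F[X]} (hH : H.Monic) (hH0 : 0 < H.natDegree) {g : E[X]}
    (hg : g.comp (H.map φ) ∈ lifts φ) : g ∈ lifts φ := by
  nontriviality E
  induction hd : g.natDegree using Nat.strong_induction_on generalizing g with
  | _ d ih =>
  obtain ⟨P, hP⟩ := (mem_lifts _).mp hg
  have hdecomp : C (g.coeff 0) + H.map φ * g.divX.comp (H.map φ) = P.map φ := by
    rw [hP]
    conv_rhs => rw [← divX_mul_X_add g]
    rw [add_comp, mul_comp, X_comp, C_comp]
    ring
  have hdegC : (C (g.coeff 0)).degree < (H.map φ).degree := by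
    rw [hH.degree_map]
    exact degree_C_le.trans_lt (natDegree_pos_iff_degree_pos.mp hH0)
  obtain ⟨hdiv, hmod⟩ := div_modByMonic_unique _ _ (hH.map φ) ⟨hdecomp, hdegC⟩
  have hdivX : g.divX ∈ lifts φ := by
    rcases eq_or_ne d 0 with rfl | hd0
    · rw [divX_eq_zero_iff.mpr (eq_C_of_natDegree_eq_zero hd)]
      exact zero_mem _
    · exact ih _ (by omega) ((mem_lifts _).mpr ⟨P /ₘ H, by rw [map_divByMonic φ hH, hdiv]⟩)
        natDegree_divX_eq_natDegree_tsub_one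
  have hC : C (g.coeff 0) ∈ lifts φ :=
    (mem_lifts _).mpr ⟨P %ₘ H, by rw [map_modByMonic φ hH, hmod]⟩
  rw [← divX_mul_X_add g]
  exact add_mem (mul_mem hdivX (X_mem_lifts φ)) hC

section FieldDescent

variable {F E : Type*} [Field F] [Field E] (φ : F →+* E)

theorem leadingCoeff_mem_fieldRange_of_sub_mem_lifts {f : F[X]} {g h r : E[X]} (hh : h.Monic)
    (hcomp : f.map φ = g.comp h) (hm : (g.natDegree : E) ≠ 0) (hr : h - r ∈ lifts φ)
    (hr0 : 0 < r.natDegree) (hrh : r.natDegree < h.natDegree) :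
    r.leadingCoeff ∈ φ.fieldRange := by
  have hg : g ≠ 0 := by rintro rfl; simp at hm
  have hq : (h - r).Monic := hh.sub_of_left (degree_lt_degree hrh)
  have hqh : h.natDegree = (h - r).natDegree := (natDegree_sub_eq_left_of_natDegree_lt hrh).symm
  set N := (g.natDegree - 1) * h.natDegree + r.natDegree
  have hdiff := hh.coeff_pow_sub_pow hq hqh g.natDegree
  rw [sub_sub_cancel, coeff_sub] at hdiff
  have hlc : g.leadingCoeff = φ f.leadingCoeff := by
    rw [← leadingCoeff_map_of_injective φ.injective, hcomp, leadingCoeff_comp (by omega),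
      hh.leadingCoeff, one_pow, mul_one]
  have hcoeff_h : (h ^ g.natDegree).coeff N = φ (f.coeff N) / g.leadingCoeff := by
    refine eq_div_of_mul_eq (leadingCoeff_ne_zero.mpr hg) ?_
    rw [mul_comm, ← coeff_comp_eq_leadingCoeff_mul_coeff_pow (by omega), ← hcomp, coeff_map]
  have hcoeff_q : ((h - r) ^ g.natDegree).coeff N ∈ φ.fieldRange :=
    (lifts_iff_coeff_lifts _).mp (pow_mem hr _) N
  rw [← mul_div_cancel_left₀ r.leadingCoeff hm, ← hdiff, hcoeff_h, hlc]
  exact div_mem (sub_mem (div_mem ⟨_, rfl⟩ ⟨_, rfl⟩) hcoeff_q) ⟨_, map_natCast φ _⟩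

theorem mem_lifts_of_map_eq_comp {f : F[X]} {g h : E[X]} (hh : h.Monic) (hh0 : h.coeff 0 = 0)
    (hm : (g.natDegree : E) ≠ 0) (hcomp : f.map φ = g.comp h) : h ∈ lifts φ := by
  rcases eq_or_ne h.natDegree 0 with hk | hk
  · rw [hh.natDegree_eq_zero.mp hk]
    exact one_mem _
  suffices ∀ r : E[X], r.natDegree < h.natDegree → h - r ∈ lifts φ → h ∈ lifts φ by
    have hlead : h - X ^ h.natDegree = h.eraseLead := by
      rw [← self_sub_monomial_natDegree_leadingCoeff, hh.leadingCoeff, X_pow_eq_monomial]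
    refine this h.eraseLead ?_ (by rw [← hlead, sub_sub_cancel]; exact X_pow_mem_lifts φ _)
    have := eraseLead_natDegree_le h
    omega
  intro r
  induction hd : r.natDegree using Nat.strong_induction_on generalizing r with
  | _ d ih =>
  intro hrh hr
  rcases eq_or_ne d 0 with rfl | hd0
  · obtain ⟨a, ha⟩ := (lifts_iff_coeff_lifts _).mp hr 0
    have hrC : r = C (φ (-a)) := by
      rw [eq_C_of_natDegree_eq_zero hd, map_neg, ha, coeff_sub, hh0, zero_sub, neg_neg]
    rw [← sub_add_cancel h r]
    exact add_mem hr (hrC ▸ C_mem_lifts φ (-a))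
  obtain ⟨a, ha⟩ := leadingCoeff_mem_fieldRange_of_sub_mem_lifts φ hh hcomp hm hr
    (by omega) (by omega)
  have herase := eraseLead_natDegree_le r
  have hsplit : h - r.eraseLead = h - r + C (φ a) * X ^ d := by
    rw [ha, ← hd, ← self_sub_monomial_natDegree_leadingCoeff, C_mul_X_pow_eq_monomial]
    ring
  refine ih _ (by omega) r.eraseLead rfl (by omega) ?_
  rw [hsplit]
  exact add_mem hr (mul_mem (C_mem_lifts φ a) (X_pow_mem_lifts φ d))

end FieldDescent

end Polynomial

theorem davenport_decompDescends_general
    {K : Type*} [Field K] (f : Polynomial K)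
    (hchar : ¬ (ringChar K ∣ f.natDegree))
    (g h : Polynomial (AlgebraicClosure K))
    (hcomp : f.map (algebraMap K (AlgebraicClosure K)) = g.comp h) :
    ∃ g' h' : Polynomial K,
      g'.natDegree = g.natDegree ∧ h'.natDegree = h.natDegree ∧ f = g'.comp h' := by
  set φ := algebraMap K (AlgebraicClosure K)
  have hn : f.natDegree = g.natDegree * h.natDegree := by
    rw [← natDegree_map_eq_of_injective φ.injective f, hcomp, natDegree_comp]
  have hn0 : (g.natDegree : K) * h.natDegree ≠ 0 := by
    rw [← Nat.cast_mul, ← hn]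
    exact mt (ringChar.spec K _).mp hchar
  have hk : h.natDegree ≠ 0 := by rintro hk; simp [hk] at hn0
  obtain ⟨L, h₁, hL, hh₁, hh₁0, rfl⟩ := exists_linear_comp_monic_eq h hk
  have hgL : (g.comp L).natDegree = g.natDegree := by rw [natDegree_comp, hL, mul_one]
  have hLh₁ : (L.comp h₁).natDegree = h₁.natDegree := by rw [natDegree_comp, hL, one_mul]
  have hm : ((g.comp L).natDegree : AlgebraicClosure K) ≠ 0 := by
    rw [hgL, ← map_natCast φ]
    exact (map_ne_zero φ).mpr (left_ne_zero_of_mul hn0)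
  obtain ⟨H, hH, hHdeg, hHmon⟩ := lifts_and_natDegree_eq_and_monic
    (mem_lifts_of_map_eq_comp φ hh₁ hh₁0 hm (by rw [hcomp, comp_assoc])) hh₁
  obtain ⟨G, hG⟩ := (mem_lifts _).mp <| mem_lifts_of_comp_mem_lifts φ hHmon (g := g.comp L)
    (by omega) (by rw [hH, comp_assoc, ← hcomp]; exact (mem_lifts _).mpr ⟨f, rfl⟩)
  refine ⟨G, H, ?_, ?_, ?_⟩
  · rw [← natDegree_map_eq_of_injective φ.injective G, hG, hgL]
  · rw [hHdeg, hLh₁]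
  · apply map_injective φ φ.injective
    rw [Polynomial.map_comp, hG, hH, hcomp, comp_assoc]

/-- **Lemma 3.4, first part (Polynomial Primitivity, [FrM69, Prop. 3.2]).**  A polynomial
`f ∈ K[X]` of degree `n ≥ 1` prime to the characteristic that decomposes over the
algebraic closure of `K` already decomposes over `K`, with composition factors of the
same degrees. -/
theorem davenport_decompDescends
    {K : Type*} [Field K] (f : Polynomial K) (hdeg : 1 ≤ f.natDegree)
    (hchar : ¬ (ringChar K ∣ f.natDegree))
    (g h : Polynomial (AlgebraicClosure K))
    (hg : 2 ≤ g.natDegree) (hh : 2 ≤ h.natDegree)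
    (hcomp : f.map (algebraMap K (AlgebraicClosure K)) = g.comp h) :
    ∃ g' h' : Polynomial K,
      g'.natDegree = g.natDegree ∧ h'.natDegree = h.natDegree ∧ f = g'.comp h' :=
  davenport_decompDescends_general f hchar g h hcomp
end

section
/- Let α be a finite set with |α| ≥ 2 and let G ≤ Sym(α) be transitive. Then there exists g ∈ G fixing no point of α: g(a) ≠ a for every a ∈ α. -/
/-- **Statement (2.5b).**  A transitive subgroup of `Sym(α)`, `|α| ≥ 2`, contains an
element fixing no point. -/
theorem davenport_fixedPointFree
    {α : Type*} [Fintype α] (hcard : 2 ≤ Fintype.card α)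
    (G : Subgroup (Equiv.Perm α))
    (htrans : ∀ a b : α, ∃ g ∈ G, g a = b) :
    ∃ g ∈ G, ∀ a : α, g a ≠ a := by
  classical
  have hne : Nonempty α := Fintype.card_pos_iff.mp (by omega)
  have hpt : MulAction.IsPretransitive G α := by
    constructor
    intro a b
    obtain ⟨g, hg, h⟩ := htrans a b
    exact ⟨⟨g, hg⟩, h⟩
  have hsub : Subsingleton (MulAction.orbitRel.Quotient G α) :=
    (MulAction.pretransitive_iff_subsingleton_quotient G α).mp hpt
  have hΩ : Fintype.card (MulAction.orbitRel.Quotient G α) = 1 :=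
    Fintype.card_eq_one_iff_nonempty_unique.mpr
      ⟨{ default := Quotient.mk'' (Classical.arbitrary α),
         uniq := fun x => Subsingleton.elim _ _ }⟩
  have hburn := MulAction.sum_card_fixedBy_eq_card_orbits_mul_card_group G α
  rw [hΩ, one_mul] at hburn
  by_contra hcon
  push_neg at hcon
  -- every g in G has a fixed point
  have hfix : ∀ g : G, 1 ≤ Fintype.card (MulAction.fixedBy α g) := by
    intro g
    obtain ⟨a, ha⟩ := hcon (g : Equiv.Perm α) g.2
    have : 0 < Fintype.card (MulAction.fixedBy α g) :=
      Fintype.card_pos_iff.mpr ⟨⟨a, ha⟩⟩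
    omega
  have hone : Fintype.card (MulAction.fixedBy α (1 : G)) = Fintype.card α := by
    apply Fintype.card_congr
    apply Equiv.subtypeUnivEquiv
    intro a
    simp [MulAction.mem_fixedBy]
  have h1 : ∑ g ∈ Finset.univ.erase (1 : G), Fintype.card (MulAction.fixedBy α g)
      + Fintype.card (MulAction.fixedBy α (1 : G)) = Fintype.card G := by
    rw [Finset.sum_erase_add _ _ (Finset.mem_univ (1 : G))]; exact hburn
  have h2 : (Finset.univ.erase (1 : G)).card ≤
      ∑ g ∈ Finset.univ.erase (1 : G), Fintype.card (MulAction.fixedBy α g) := by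
    rw [Finset.card_eq_sum_ones]
    exact Finset.sum_le_sum fun g _ => hfix g
  have h3 : (Finset.univ.erase (1 : G)).card = Fintype.card G - 1 := by
    rw [Finset.card_erase_of_mem (Finset.mem_univ _), Finset.card_univ]
  have h4 : 1 ≤ Fintype.card G := Fintype.card_pos
  omega
end

section
/- For every prime p ≠ 2 there exists x ∈ ℤ/pℤ with 16·x⁸ = 1, but there exists no x ∈ ℚ with 16·x⁸ = 1. -/
lemma sq_disj {p : ℕ} [Fact p.Prime] (hp : p ≠ 2) :
    IsSquare (2 : ZMod p) ∨ IsSquare (-1 : ZMod p) ∨ IsSquare (-2 : ZMod p) := by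
  have hchar : ringChar (ZMod p) ≠ 2 := by
    rw [ZMod.ringChar_zmod_n]; exact hp
  by_cases h2 : IsSquare (2 : ZMod p)
  · exact Or.inl h2
  by_cases h1 : IsSquare (-1 : ZMod p)
  · exact Or.inr (Or.inl h1)
  right; right
  have h2' : quadraticChar (ZMod p) 2 = -1 :=
    (quadraticChar_neg_one_iff_not_isSquare).mpr h2
  have h1' : quadraticChar (ZMod p) (-1) = -1 :=
    (quadraticChar_neg_one_iff_not_isSquare).mpr h1
  have hne : (-2 : ZMod p) ≠ 0 := by
    intro h
    have : (2 : ZMod p) = 0 := by linear_combination -h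
    exact (Ring.two_ne_zero hchar) this
  rw [← quadraticChar_one_iff_isSquare hne]
  have : (-2 : ZMod p) = (-1) * 2 := by ring
  rw [this, map_mul, h1', h2']; ring

/-- **Example 2.3 (x^8exmp).**  `16x⁸ - 1` has a zero modulo every odd prime, but no
rational zero. -/
theorem davenport_sixteenXeight :
    (∀ p : ℕ, p.Prime → p ≠ 2 → ∃ x : ZMod p, 16 * x ^ 8 = 1) ∧
      ¬ ∃ x : ℚ, 16 * x ^ 8 = 1 := by
  constructor
  · intro p hp hp2
    haveI : Fact p.Prime := ⟨hp⟩
    have h2 : (2 : ZMod p) ≠ 0 := by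
      have hchar : ringChar (ZMod p) ≠ 2 := by rw [ZMod.ringChar_zmod_n]; exact hp2
      exact Ring.two_ne_zero hchar
    rcases sq_disj hp2 with ⟨a, ha⟩ | ⟨c, hc⟩ | ⟨b, hb⟩
    · -- 2 = a * a
      have ha0 : a ≠ 0 := by intro h; rw [h, mul_zero] at ha; exact h2 ha
      refine ⟨a⁻¹, ?_⟩
      have : 16 * (a⁻¹) ^ 8 = (2 * (a⁻¹)^2) ^ 4 * (2 * a^2 * (a⁻¹)^2)⁻¹ ^ 0 := by ring
      field_simp
      linear_combination (a^6 + 2*a^4 + 4*a^2 + 8) * ha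
    · -- -1 = c * c
      refine ⟨(c - 1) * 2⁻¹, ?_⟩
      have hc' : c ^ 2 = -1 := by rw [sq]; exact hc.symm
      have h8 : (c - 1) ^ 8 = 16 := by
        have e : (c - 1) ^ 8 = ((c - 1) ^ 2) ^ 4 := by ring
        have e2 : (c - 1) ^ 2 = -2 * c := by linear_combination hc'
        rw [e, e2]
        linear_combination (16 * (c ^ 2 - 1)) * hc'
      have h2' : ((2 : ZMod p) ^ 8) ≠ 0 := pow_ne_zero _ h2
      have : 16 * ((c - 1) * 2⁻¹) ^ 8 = 16 * (c - 1) ^ 8 * ((2 : ZMod p) ^ 8)⁻¹ := by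
        rw [mul_pow, inv_pow]; ring
      rw [this, h8]
      have h256 : (16 : ZMod p) * 16 = 2 ^ 8 := by norm_num
      rw [h256, mul_inv_cancel₀ h2']
    · -- -2 = b * b
      have hb0 : b ≠ 0 := by
        intro h; rw [h, mul_zero] at hb
        apply h2
        linear_combination -hb
      refine ⟨b⁻¹, ?_⟩
      have hbi : b * b⁻¹ = 1 := mul_inv_cancel₀ hb0
      have key : 2 * (b⁻¹) ^ 2 = -1 := by
        have : 2 * (b⁻¹) ^ 2 = -(b * b) * (b⁻¹)^2 := by rw [← hb]; ring
        rw [this]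
        calc -(b * b) * (b⁻¹)^2 = -((b * b⁻¹) * (b * b⁻¹)) := by ring
        _ = -1 := by rw [hbi]; ring
      calc 16 * (b⁻¹) ^ 8 = (2 * (b⁻¹)^2) ^ 4 := by ring
      _ = 1 := by rw [key]; ring
  · rintro ⟨x, hx⟩
    set y : ℚ := 2 * x ^ 2 with hy
    have hy0 : 0 ≤ y := by positivity
    have h4 : (y ^ 2 - 1) * (y ^ 2 + 1) = 0 := by linear_combination hx
    have hy2 : y ^ 2 = 1 := by
      rcases mul_eq_zero.mp h4 with h | h
      · linarith
      · nlinarith [sq_nonneg y]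
    have hy1 : y = 1 := by
      have : (y - 1) * (y + 1) = 0 := by linear_combination hy2
      rcases mul_eq_zero.mp this with h | h
      · linarith
      · linarith
    have hq : ((2 * x : ℚ) : ℝ) ^ 2 = 2 := by
      have : (2 * x : ℚ) ^ 2 = 2 := by rw [hy] at hy1; linear_combination 2 * hy1
      exact_mod_cast congrArg (fun t : ℚ => (t : ℝ)) this
    have hs : Real.sqrt 2 = |((2 * x : ℚ) : ℝ)| := by
      rw [← hq, Real.sqrt_sq_eq_abs]
    exact irrational_sqrt_two ⟨|2 * x|, by rw [Rat.cast_abs, ← hs]⟩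
end

section
/- Let F be a finite field of odd cardinality q, let a ∈ F be nonzero, and let n be an odd positive integer not divisible by the characteristic of F. Then the map F → F given by x ↦ D_n(x, a), evaluation of the Dickson polynomial of the first kind with parameter a, is a bijection of F if and only if gcd(n, q² − 1) = 1. -/
/-!
Over an algebraic closure `K` of `F`, every `x ∈ F` can be written `x = u + a/u`; since `x` is
fixed by `z ↦ z ^ q`, so is the pair `{u, a/u}`, i.e. `u ^ q = u` or `u ^ q * u = a`. In both cases
`u ^ (q² - 1) = 1`, and `D_n(x, a) = u ^ n + (a/u) ^ n`.

If `gcd(n, q² - 1) = 1`, then `u ↦ u ^ n` is injective on the `(q² - 1)`-th roots of unity, so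
`D_n(x, a)` determines the pair `{u ^ n, (a/u) ^ n}`, hence `{u, a/u}`, hence `x`.

Otherwise an odd prime `p` divides `n` and `q - 1` or `q + 1`. Take `u = 1` in the first case and
`u ^ (q + 1) = a` in the second: then for every `p`-th root of unity `ζ`, `ζu + a/(ζu)` lies in `F`
and has the same `D_n`-value as `u + a/u`. These two elements differ as soon as `ζ ≠ 1` and
`ζu² ≠ a`, which holds for `ζ` or `ζ²` when `ζ` is a primitive `p`-th root of unity.
-/

open Polynomial

theorem Polynomial.dickson_one_eval_add_of_mul_eq {R : Type*} [CommRing R] {a x y : R}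
    (h : x * y = a) : ∀ n, (dickson 1 a n).eval (x + y) = x ^ n + y ^ n
  | 0 => by norm_num [dickson_zero]
  | 1 => by simp [dickson_one]
  | n + 2 => by
    rw [dickson_add_two, eval_sub, eval_mul, eval_mul, eval_X, eval_C,
      dickson_one_eval_add_of_mul_eq h n, dickson_one_eval_add_of_mul_eq h (n + 1), ← h]
    ring

theorem add_div_eq_add_div_iff {K : Type*} [Field K] {c s t : K} (hs : s ≠ 0) (ht : t ≠ 0) :
    s + c / s = t + c / t ↔ s = t ∨ s * t = c := by
  have key : s + c / s - (t + c / t) = (s - t) * (s * t - c) / (s * t) := by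
    field_simp
    ring
  rw [← sub_eq_zero, key, div_eq_zero_iff, mul_eq_zero, sub_eq_zero, sub_eq_zero,
    or_iff_left (mul_ne_zero hs ht)]

theorem eq_of_pow_eq_of_coprime {G₀ : Type*} [CommGroupWithZero G₀] {m n : ℕ}
    (hnm : n.Coprime m) {u w : G₀} (hw : w ≠ 0) (hu : u ^ m = 1) (hw' : w ^ m = 1)
    (h : u ^ n = w ^ n) : u = w := by
  rw [← div_eq_one_iff_eq hw, ← pow_eq_one_iff_of_coprime hnm, div_pow, div_pow, h, hu, hw',
    div_self (pow_ne_zero n hw), div_one]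
  exact ⟨rfl, rfl⟩

theorem IsPrimitiveRoot.exists_mul_ne {R : Type*} [CommRing R] [IsDomain R] {ζ : R} {p : ℕ}
    (hζ : IsPrimitiveRoot ζ p) (hp : 1 < p) (hp_odd : Odd p) {d : R} (hd : d ≠ 0) (c : R) :
    ∃ ξ : R, IsPrimitiveRoot ξ p ∧ ξ * d ≠ c := by
  by_cases h : ζ * d = c
  · refine ⟨ζ ^ 2, hζ.pow_of_coprime 2 (Nat.coprime_two_left.mpr hp_odd), fun h2 => ?_⟩
    refine hζ.ne_one hp (mul_left_cancel₀ (hζ.ne_zero (by omega)) ?_)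
    rw [mul_one, ← sq]
    exact mul_right_cancel₀ hd (h2.trans h.symm)
  · exact ⟨ζ, hζ, h⟩

theorem algebraMap_dickson_eval_of_eq_add_div {R K : Type*} [CommRing R] [Field K]
    [Algebra R K] {a x : R} {u : K} (hu : u ≠ 0)
    (hx : algebraMap R K x = u + algebraMap R K a / u) (n : ℕ) :
    algebraMap R K ((dickson 1 a n).eval x) = u ^ n + algebraMap R K a ^ n / u ^ n := by
  rw [← eval₂_at_apply, ← eval_map, map_dickson, hx,
    dickson_one_eval_add_of_mul_eq (mul_div_cancel₀ _ hu), div_pow]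

section DicksonPermutation

variable {F K : Type*} [Field F] [Field K] [Algebra F K]

theorem exists_algebraMap_eq_add_div [IsAlgClosed K] {a : F} (ha : a ≠ 0) (x : F) :
    ∃ u : K, u ≠ 0 ∧ algebraMap F K x = u + algebraMap F K a / u := by
  have hdeg : (X ^ 2 - C (algebraMap F K x) * X + C (algebraMap F K a)).degree = 2 := by
    compute_degree!
  obtain ⟨u, hu⟩ := IsAlgClosed.exists_root _ (by rw [hdeg]; decide)
  replace hu : u ^ 2 - algebraMap F K x * u + algebraMap F K a = 0 := by simpa using hu
  have hu0 : u ≠ 0 := by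
    rintro rfl
    simp_all
  refine ⟨u, hu0, ?_⟩
  field_simp
  linear_combination -hu

theorem not_injective_dickson_of_mul_add_div_mem_range {a : F} {n : ℕ} {u ζ : K} (hu : u ≠ 0)
    (hζ0 : ζ ≠ 0) (hζn : ζ ^ n = 1) (hζ1 : ζ ≠ 1) (hζu : ζ * u ^ 2 ≠ algebraMap F K a)
    (hx : u + algebraMap F K a / u ∈ Set.range (algebraMap F K))
    (hy : ζ * u + algebraMap F K a / (ζ * u) ∈ Set.range (algebraMap F K)) :
    ¬ Function.Injective fun x : F => (dickson 1 a n).eval x := by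
  obtain ⟨x, hx⟩ := hx
  obtain ⟨y, hy⟩ := hy
  intro hinj
  have hxy : x = y := hinj <| (algebraMap F K).injective <| by
    rw [algebraMap_dickson_eval_of_eq_add_div hu hx,
      algebraMap_dickson_eval_of_eq_add_div (mul_ne_zero hζ0 hu) hy, mul_pow, hζn, one_mul]
  rcases (add_div_eq_add_div_iff hu (mul_ne_zero hζ0 hu)).mp (by rw [← hx, ← hy, hxy]) with h | h
  · exact hζ1 (mul_right_cancel₀ hu (by rw [← h, one_mul]))
  · exact hζu (by rw [← h]; ring)

variable [Fintype F]

local notation "q" => Fintype.card F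

theorem FiniteField.mem_range_algebraMap_iff_pow_card_eq {z : K} :
    z ∈ Set.range (algebraMap F K) ↔ z ^ q = z := by
  constructor
  · rintro ⟨x, rfl⟩
    rw [← map_pow, FiniteField.pow_card]
  · intro hz
    have hsplit : (X ^ q - X : F[X]).Splits := by
      rw [splits_iff_card_roots, FiniteField.roots_X_pow_card_sub_X,
        FiniteField.X_pow_card_sub_X_natDegree_eq F Fintype.one_lt_card]
      rfl
    exact RingHom.mem_range.mp (hsplit.mem_range_of_isRoot
      (FiniteField.X_pow_card_sub_X_ne_zero F Fintype.one_lt_card) (by simp [hz]))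

theorem add_div_mem_range_algebraMap_iff (a : F) {w : K} (hw : w ≠ 0) :
    w + algebraMap F K a / w ∈ Set.range (algebraMap F K) ↔
      w ^ q = w ∨ w ^ q * w = algebraMap F K a := by
  have hfrob : (w + algebraMap F K a / w) ^ q = w ^ q + algebraMap F K a / w ^ q := by
    have := map_add (FiniteField.frobeniusAlgHom F K) w (algebraMap F K a / w)
    rwa [map_div₀, AlgHom.commutes] at this
  rw [FiniteField.mem_range_algebraMap_iff_pow_card_eq, hfrob,
    add_div_eq_add_div_iff (pow_ne_zero q hw) hw]

theorem pow_card_sq_sub_one_eq_one (a : F) {w : K} (hw : w ≠ 0)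
    (h : w ^ q = w ∨ w ^ q * w = algebraMap F K a) : w ^ (q ^ 2 - 1) = 1 := by
  suffices w ^ q ^ 2 = w by
    rw [pow_sub₀ w hw (Nat.one_le_pow _ _ Fintype.card_pos), this, pow_one, mul_inv_cancel₀ hw]
  rw [sq, pow_mul]
  rcases h with h | h
  · rw [h, h]
  · rw [eq_div_of_mul_eq hw h, div_pow, ← map_pow, FiniteField.pow_card,
      eq_div_of_mul_eq hw h, div_div_cancel₀ (h ▸ mul_ne_zero (pow_ne_zero q hw) hw)]

theorem injective_dickson_of_coprime {a : F} (ha : a ≠ 0) {n : ℕ}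
    (hn : n.Coprime (q ^ 2 - 1)) : Function.Injective fun x : F => (dickson 1 a n).eval x := by
  let K := AlgebraicClosure F
  have hA0 : algebraMap F K a ≠ 0 := by simpa using ha
  have hA : algebraMap F K a ^ (q ^ 2 - 1) = 1 :=
    pow_card_sq_sub_one_eq_one a hA0 (Or.inl (by rw [← map_pow, FiniteField.pow_card]))
  intro x y hxy
  obtain ⟨u, hu0, hxu⟩ := exists_algebraMap_eq_add_div (K := K) ha x
  obtain ⟨v, hv0, hyv⟩ := exists_algebraMap_eq_add_div (K := K) ha y
  have hu := pow_card_sq_sub_one_eq_one a hu0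
    ((add_div_mem_range_algebraMap_iff a hu0).mp ⟨x, hxu⟩)
  have hv := pow_card_sq_sub_one_eq_one a hv0
    ((add_div_mem_range_algebraMap_iff a hv0).mp ⟨y, hyv⟩)
  have hD := congrArg (algebraMap F K) hxy
  simp only [algebraMap_dickson_eval_of_eq_add_div hu0 hxu,
    algebraMap_dickson_eval_of_eq_add_div hv0 hyv] at hD
  apply (algebraMap F K).injective
  rw [hxu, hyv]
  rcases (add_div_eq_add_div_iff (pow_ne_zero n hu0) (pow_ne_zero n hv0)).mp hD with h | h
  · rw [eq_of_pow_eq_of_coprime hn hv0 hu hv h]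
  · rw [eq_of_pow_eq_of_coprime hn (div_ne_zero hA0 hv0) hu (by rw [div_pow, hA, hv, div_one])
      (by rw [div_pow, eq_div_iff (pow_ne_zero n hv0), h]), div_div_cancel₀ hA0, add_comm]

theorem exists_forall_pow_eq_one_mul_add_div_mem_range [IsAlgClosed K] {a : F} (ha : a ≠ 0)
    {p : ℕ} (hp : p.Prime) (hpq : p ∣ q ^ 2 - 1) :
    ∃ u : K, u ≠ 0 ∧ ∀ ζ : K, ζ ^ p = 1 →
      ζ * u + algebraMap F K a / (ζ * u) ∈ Set.range (algebraMap F K) := by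
  rw [← one_pow 2, Nat.sq_sub_sq] at hpq
  have hζ0 {ζ : K} (hζ : ζ ^ p = 1) : ζ ≠ 0 := by
    rintro rfl
    simp [hp.ne_zero] at hζ
  rcases hp.dvd_mul.mp hpq with ⟨c, hc⟩ | ⟨c, hc⟩
  · obtain ⟨u, hu⟩ := IsAlgClosed.exists_pow_nat_eq (algebraMap F K a) (Nat.succ_pos q)
    have hu0 : u ≠ 0 := by
      rintro rfl
      exact ha (by simpa using hu.symm)
    refine ⟨u, hu0, fun ζ hζ => (add_div_mem_range_algebraMap_iff a
      (mul_ne_zero (hζ0 hζ) hu0)).mpr (Or.inr ?_)⟩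
    rw [← pow_succ, mul_pow, hu, hc, pow_mul, hζ, one_pow, one_mul]
  · refine ⟨1, one_ne_zero, fun ζ hζ => (add_div_mem_range_algebraMap_iff a
      (by simpa using hζ0 hζ)).mpr (Or.inl ?_)⟩
    rw [mul_one, ← pow_sub_one_mul Fintype.card_ne_zero, hc, pow_mul, hζ, one_pow, one_mul]

theorem not_injective_dickson_of_prime_dvd {a : F} (ha : a ≠ 0) {n p : ℕ} (hp : p.Prime)
    (hp_odd : Odd p) (hpn : p ∣ n) (hpq : p ∣ q ^ 2 - 1) :
    ¬ Function.Injective fun x : F => (dickson 1 a n).eval x := by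
  let K := AlgebraicClosure F
  have : NeZero (p : K) := ⟨fun hp0 => by
    have hq : (q : K) = 0 := by
      rw [← map_natCast (algebraMap F K), FiniteField.cast_card_eq_zero, map_zero]
    have := Nat.cast_dvd_cast (α := K) hpq
    rw [hp0, zero_dvd_iff, Nat.cast_sub (Nat.one_le_pow _ _ Fintype.card_pos)] at this
    simp [hq] at this⟩
  obtain ⟨u, hu0, hu⟩ := exists_forall_pow_eq_one_mul_add_div_mem_range (K := K) ha hp hpq
  obtain ⟨ζ, hζ⟩ := HasEnoughRootsOfUnity.exists_primitiveRoot K p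
  obtain ⟨ξ, hξ, hξu⟩ := hζ.exists_mul_ne hp.one_lt hp_odd (pow_ne_zero 2 hu0) (algebraMap F K a)
  exact not_injective_dickson_of_mul_add_div_mem_range hu0 (hξ.ne_zero hp.ne_zero)
    ((hξ.pow_eq_one_iff_dvd n).mpr hpn) (hξ.ne_one hp.one_lt) hξu
    (by simpa using hu 1 (one_pow p)) (hu ξ hξ.pow_eq_one)

end DicksonPermutation

theorem davenport_dicksonExceptional_general
    {F : Type*} [Field F] [Fintype F]
    (a : F) (ha : a ≠ 0) (n : ℕ) (hnodd : Odd n) :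
    Function.Bijective (fun x : F => (Polynomial.dickson 1 a n).eval x) ↔
      Nat.gcd n (Fintype.card F ^ 2 - 1) = 1 := by
  rw [← Finite.injective_iff_bijective]
  refine ⟨fun hinj => ?_, injective_dickson_of_coprime ha⟩
  by_contra hgcd
  obtain ⟨p, hp, hpn, hpq⟩ := Nat.Prime.not_coprime_iff_dvd.mp hgcd
  exact not_injective_dickson_of_prime_dvd ha hp (hnodd.of_dvd_nat hpn) hpn hpq hinj

/-- **Lemma 3.11 (monPrecCheb), permutation-polynomial content.**  For `F` a finite
field of odd cardinality `q`, `a ∈ Fˣ`, and `n` odd and prime to the characteristic, the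
Dickson polynomial `D_n(·, a)` permutes `F` iff `gcd(n, q² - 1) = 1`. -/
theorem davenport_dicksonExceptional
    {F : Type*} [Field F] [Fintype F] (hodd : Odd (Fintype.card F))
    (a : F) (ha : a ≠ 0) (n : ℕ) (hn : 0 < n) (hnodd : Odd n)
    (hchar : ¬ (ringChar F ∣ n)) :
    Function.Bijective (fun x : F => (Polynomial.dickson 1 a n).eval x) ↔
      Nat.gcd n (Fintype.card F ^ 2 - 1) = 1 :=
  davenport_dicksonExceptional_general a ha n hnodd
end

section
/- Let G be a group and q₁, q₂, q₃ ∈ G satisfying the commuting relation q₁q₃ = q₃q₁, the braid relations q₁q₂q₁ = q₂q₁q₂ and q₂q₃q₂ = q₃q₂q₃, and the sphere relation q₁q₂q₃q₃q₂q₁ = 1. Let N be the normal closure in G of the single element q₁q₃⁻¹. Then (q₁q₂)³ ∈ N and (q₁q₂q₃)² ∈ N; hence, in G/N, the images γ₀ of q₁q₂ and γ₁ of q₁q₂q₃ satisfy γ₀³ = 1 and γ₁² = 1. -/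
/-- **§6.2.5 computation.**  In a group with elements `q₁, q₂, q₃` satisfying the
commuting, braid and sphere relations of the Hurwitz monodromy group `H₄`, with `N` the
normal closure of `q₁q₃⁻¹`, one has `(q₁q₂)³ ∈ N` and `(q₁q₂q₃)² ∈ N`; hence in `G/N`
the images `γ₀` of `q₁q₂` and `γ₁` of `q₁q₂q₃` satisfy `γ₀³ = 1` and `γ₁² = 1`. -/
theorem davenport_mappingClassRelations
    {G : Type*} [Group G] (q₁ q₂ q₃ : G)
    (hcomm : q₁ * q₃ = q₃ * q₁)
    (hbraid₁ : q₁ * q₂ * q₁ = q₂ * q₁ * q₂)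
    (hbraid₂ : q₂ * q₃ * q₂ = q₃ * q₂ * q₃)
    (hsphere : q₁ * q₂ * q₃ * q₃ * q₂ * q₁ = 1) :
    (q₁ * q₂) ^ 3 ∈ Subgroup.normalClosure {q₁ * q₃⁻¹} ∧
    (q₁ * q₂ * q₃) ^ 2 ∈ Subgroup.normalClosure {q₁ * q₃⁻¹} ∧
    ((QuotientGroup.mk (q₁ * q₂) : G ⧸ Subgroup.normalClosure {q₁ * q₃⁻¹}) ^ 3 = 1 ∧
      (QuotientGroup.mk (q₁ * q₂ * q₃) : G ⧸ Subgroup.normalClosure {q₁ * q₃⁻¹}) ^ 2 = 1) := by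
  set N := Subgroup.normalClosure {q₁ * q₃⁻¹} with hN
  -- images in the quotient
  set A : G ⧸ N := QuotientGroup.mk q₁ with hA
  set B : G ⧸ N := QuotientGroup.mk q₂ with hB
  set C : G ⧸ N := QuotientGroup.mk q₃ with hC
  have hmem : q₁ * q₃⁻¹ ∈ N := Subgroup.subset_normalClosure rfl
  have h13 : A = C := by
    have h1 : ((QuotientGroup.mk (q₁ * q₃⁻¹) : G ⧸ N)) = 1 :=
      (QuotientGroup.eq_one_iff _).mpr hmem
    have : A * C⁻¹ = 1 := by
      simpa [hA, hC] using h1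
    exact mul_inv_eq_one.mp this
  have hS : A * B * A * (A * B * A) = 1 := by
    have h1 : ((QuotientGroup.mk (q₁ * q₂ * q₃ * q₃ * q₂ * q₁) : G ⧸ N)) = 1 := by
      rw [hsphere]; rfl
    calc A * B * A * (A * B * A) = A * B * C * C * B * A := by
          rw [h13]; group
      _ = 1 := by simpa [hA, hB, hC, mul_assoc] using h1
  have hbr : A * B * A = B * A * B := by
    have := congrArg (QuotientGroup.mk (s := N)) hbraid₁
    simpa [hA, hB] using this
  have hq1 : (QuotientGroup.mk (q₁ * q₂ * q₃) : G ⧸ N) ^ 2 = 1 := by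
    have : (QuotientGroup.mk (q₁ * q₂ * q₃) : G ⧸ N) = A * B * C := rfl
    rw [this, ← h13, sq, hS]
  have hq0 : (QuotientGroup.mk (q₁ * q₂) : G ⧸ N) ^ 3 = 1 := by
    have h : (QuotientGroup.mk (q₁ * q₂) : G ⧸ N) = A * B := rfl
    rw [h]
    calc (A * B) ^ 3 = (A * B * A) * (B * A * B) := by
          simp only [pow_succ, pow_zero, one_mul, mul_assoc]
      _ = (A * B * A) * (A * B * A) := by rw [← hbr]
      _ = 1 := hS
  refine ⟨?_, ?_, hq0, hq1⟩
  · exact (QuotientGroup.eq_one_iff _).mp (by simpa using hq0)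
  · exact (QuotientGroup.eq_one_iff _).mp (by simpa using hq1)
end
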